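/- arXiv:2406.03960 — 8 statements merged into one kernel-verified Lean document; each statement's English description precedes it below -/
import Mathlib

section
/- Let n and m be nonzero integers and let p be a prime with ν_p(n) = ν_p(m). Then for every natural number l there exist a finite group Q and a group homomorphism φ : BS(n,m) → Q such that the order of φ(a) is exactly p^l, where a is the first generator of BS(n,m). -/
/-- The single relator `a^n t a^{-m} t⁻¹` of the Baumslag–Solitar group `BS(n,m)`,
with generator `0 = a` and `1 = t`. -/
def BSRel (n m : ℤ) : Set (FreeGroup (Fin 2)) :=
  {FreeGroup.of 0 ^ n * FreeGroup.of 1 * FreeGroup.of 0 ^ (-m) * (FreeGroup.of 1)⁻¹}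

/-- The Baumslag–Solitar group `BS(n,m) = ⟨a, t ∣ a^n = t a^m t⁻¹⟩`. -/
abbrev BS (n m : ℤ) := PresentedGroup (BSRel n m)

/-- The first generator `a` of `BS(n,m)`. -/
abbrev BS.a (n m : ℤ) : BS n m := PresentedGroup.of 0

/-! `BS(n,m)` acts on `ZMod (p ^ l)` by affine maps, `a` as `x ↦ x + 1` and `t` as `x ↦ u * x`,
as soon as `u` is a unit with `n = u * m` in `ZMod (p ^ l)`. Such a unit exists because `n` and `m`
are both `p ^ ν` times a unit modulo `p ^ l`, with the same `ν`. The translation `x ↦ x + 1` has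
order exactly `p ^ l`. -/

namespace BS

variable {n m : ℤ} {G : Type*} [Group G] {α τ : G}

theorem relator_eq_one_iff : α ^ n * τ * α ^ (-m) * τ⁻¹ = 1 ↔ α ^ n = τ * α ^ m * τ⁻¹ := by
  rw [zpow_neg, mul_inv_eq_one, mul_inv_eq_iff_eq_mul, eq_mul_inv_iff_mul_eq]

def lift (h : α ^ n = τ * α ^ m * τ⁻¹) : BS n m →* G :=
  PresentedGroup.toGroup (f := ![α, τ]) <| by
    rintro r rfl
    simpa only [map_mul, map_zpow, map_inv, FreeGroup.lift_apply_of, Matrix.cons_val_zero,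
      Matrix.cons_val_one, relator_eq_one_iff] using h

@[simp]
theorem lift_a (h : α ^ n = τ * α ^ m * τ⁻¹) : lift h (BS.a n m) = α :=
  PresentedGroup.toGroup.of _

end BS

theorem Equiv.constVAddHom_injective (G : Type*) [AddGroup G] :
    Function.Injective (Equiv.constVAddHom G G) := fun x y h =>
  Multiplicative.toAdd.injective <| by simpa [Equiv.constVAddHom] using congr($h 0)

theorem Equiv.constVAdd_zsmul {G P : Type*} [AddGroup G] [AddTorsor G P] (k : ℤ) (g : G) :
    Equiv.constVAdd P (k • g) = Equiv.constVAdd P g ^ k :=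
  map_zpow (Equiv.constVAddHom G P) (Multiplicative.ofAdd g) k

theorem Equiv.orderOf_constVAdd {G : Type*} [AddGroup G] (g : G) :
    orderOf (Equiv.constVAdd G g) = addOrderOf g := by
  rw [← orderOf_ofAdd_eq_addOrderOf, ← orderOf_injective _ (Equiv.constVAddHom_injective G)]
  rfl

theorem constVAdd_one_zpow_eq_conj {R : Type*} [CommRing R] {n m : ℤ} {u : Rˣ}
    (hu : (n : R) = u * m) :
    Equiv.constVAdd R (1 : R) ^ n = MulAction.toPermHom Rˣ R u *
      Equiv.constVAdd R (1 : R) ^ m * (MulAction.toPermHom Rˣ R u)⁻¹ := by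
  ext x
  simp [← Equiv.constVAdd_zsmul, Units.smul_def, hu]

namespace ZMod

variable {p : ℕ}

theorem exists_natCast_eq_pow_padicValNat_mul_unit (hp : p.Prime) (l : ℕ) {k : ℕ} (hk : k ≠ 0) :
    ∃ w : (ZMod (p ^ l))ˣ, (k : ZMod (p ^ l)) = p ^ padicValNat p k * w := by
  have hcop : (k / p ^ k.factorization p).Coprime (p ^ l) :=
    ((hp.coprime_iff_not_dvd.mpr (Nat.not_dvd_ordCompl hp hk)).symm).pow_right l
  refine ⟨unitOfCoprime _ hcop, ?_⟩
  rw [coe_unitOfCoprime, ← Nat.factorization_def k hp, ← Nat.cast_pow, ← Nat.cast_mul,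
    Nat.ordProj_mul_ordCompl_eq_self]

theorem exists_intCast_eq_pow_padicValNat_mul_unit (hp : p.Prime) (l : ℕ) {z : ℤ} (hz : z ≠ 0) :
    ∃ w : (ZMod (p ^ l))ˣ, (z : ZMod (p ^ l)) = p ^ padicValNat p z.natAbs * w := by
  obtain ⟨k, rfl | rfl⟩ := Int.eq_nat_or_neg z
  · simpa using exists_natCast_eq_pow_padicValNat_mul_unit hp l (k := k) (by omega)
  · obtain ⟨w, hw⟩ := exists_natCast_eq_pow_padicValNat_mul_unit hp l (k := k) (by omega)
    exact ⟨-w, by simp [hw]⟩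

theorem exists_unit_mul_intCast_eq (hp : p.Prime) (l : ℕ) {n m : ℤ} (hn : n ≠ 0) (hm : m ≠ 0)
    (hval : padicValNat p n.natAbs = padicValNat p m.natAbs) :
    ∃ u : (ZMod (p ^ l))ˣ, (n : ZMod (p ^ l)) = u * m := by
  obtain ⟨wn, hwn⟩ := exists_intCast_eq_pow_padicValNat_mul_unit hp l hn
  obtain ⟨wm, hwm⟩ := exists_intCast_eq_pow_padicValNat_mul_unit hp l hm
  refine ⟨wn * wm⁻¹, ?_⟩
  rw [hwn, hwm, hval, Units.val_mul, mul_left_comm, mul_assoc, Units.inv_mul, mul_one, mul_comm]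

end ZMod

/-- Paper's Lemma 3.1 (Mini_Closure), loop case: if `p` is a prime with
`ν_p(n) = ν_p(m)` then `BS(n,m)` has finite quotients in which the image of `a`
has order exactly `p^l`, for every `l`. -/
theorem BS_finite_quotient_order_pow
    (n m : ℤ) (hn : n ≠ 0) (hm : m ≠ 0) (p : ℕ) (hp : p.Prime)
    (hval : padicValNat p n.natAbs = padicValNat p m.natAbs) (l : ℕ) :
    ∃ (Q : Type) (_ : Group Q) (_ : Finite Q) (φ : BS n m →* Q),
      orderOf (φ (BS.a n m)) = p ^ l := by
  have : NeZero (p ^ l) := ⟨pow_ne_zero l hp.ne_zero⟩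
  obtain ⟨u, hu⟩ := ZMod.exists_unit_mul_intCast_eq hp l hn hm hval
  refine ⟨Equiv.Perm (ZMod (p ^ l)), inferInstance, inferInstance,
    BS.lift (constVAdd_one_zpow_eq_conj hu), ?_⟩
  rw [BS.lift_a, Equiv.orderOf_constVAdd, ZMod.addOrderOf_one]
end

section
/- Let n and m be nonzero integers and let p be a prime with ν_p(n) ≠ ν_p(m). Then for every finite group Q and every group homomorphism φ : BS(n,m) → Q, the p-adic valuation of the order of φ(a) is at most min(ν_p(n), ν_p(m)), where a is the first generator of BS(n,m). -/
/-!
In a finite quotient the relation `a^n = t a^m t⁻¹` makes `x^n` and `x^m` conjugate, where `x`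
is the image of `a` and `N` its order, so they have the same order `N / gcd(N, n) = N / gcd(N, m)`.
Hence `gcd(N, n) = gcd(N, m)`, i.e. `min(ν_p N, ν_p n) = min(ν_p N, ν_p m)`, and when
`ν_p n ≠ ν_p m` this forces `ν_p N ≤ min(ν_p n, ν_p m)`.
-/

theorem IsOfFinOrder.orderOf_zpow {G : Type*} [Group G] {x : G} (hx : IsOfFinOrder x) (k : ℤ) :
    orderOf (x ^ k) = orderOf x / (orderOf x).gcd k.natAbs := by
  rw [← hx.orderOf_pow]
  rcases Int.natAbs_eq k with hk | hk
  · rw [hk, zpow_natCast, Int.natAbs_natCast]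
  · rw [hk, zpow_neg, zpow_natCast, orderOf_inv, Int.natAbs_neg, Int.natAbs_natCast]

theorem IsConj.gcd_orderOf_natAbs_eq {G : Type*} [Group G] {x : G} (hx : IsOfFinOrder x)
    {n m : ℤ} (h : IsConj (x ^ n) (x ^ m)) :
    (orderOf x).gcd n.natAbs = (orderOf x).gcd m.natAbs := by
  obtain ⟨c, hc⟩ := h
  have hord := hc.orderOf_eq
  rw [hx.orderOf_zpow, hx.orderOf_zpow] at hord
  have hN := hx.orderOf_pos.ne'
  rw [← Nat.div_div_self (Nat.gcd_dvd_left _ n.natAbs) hN, hord,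
    Nat.div_div_self (Nat.gcd_dvd_left _ _) hN]

theorem padicValNat_le_min_of_gcd_eq {p N c d : ℕ} (hp : p.Prime) (hN : N ≠ 0) (hc : c ≠ 0)
    (hd : d ≠ 0) (hgcd : N.gcd c = N.gcd d) (hval : padicValNat p c ≠ padicValNat p d) :
    padicValNat p N ≤ min (padicValNat p c) (padicValNat p d) := by
  have hmin := congrArg (fun k => k.factorization p) hgcd
  simp only [Nat.factorization_gcd hN hc, Nat.factorization_gcd hN hd, Finsupp.inf_apply,
    Nat.factorization_def _ hp] at hmin
  omega

abbrev BS.t (n m : ℤ) : BS n m := PresentedGroup.of 1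

theorem BS.a_zpow_eq_conj (n m : ℤ) : BS.a n m ^ n = BS.t n m * BS.a n m ^ m * (BS.t n m)⁻¹ := by
  have hrel : BS.a n m ^ n * BS.t n m * BS.a n m ^ (-m) * (BS.t n m)⁻¹ = 1 := by
    have hmk := PresentedGroup.one_of_mem (rels := BSRel n m) (Set.mem_singleton _)
    simp only [map_mul, map_zpow, map_inv] at hmk
    exact hmk
  rw [← mul_inv_eq_one, ← hrel]
  group

theorem BS.isConj_map_a_zpow {n m : ℤ} {Q : Type*} [Group Q] (φ : BS n m →* Q) :
    IsConj (φ (BS.a n m) ^ m) (φ (BS.a n m) ^ n) :=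
  isConj_iff.mpr ⟨φ (BS.t n m), by simp only [← map_zpow, ← map_mul, ← map_inv, BS.a_zpow_eq_conj]⟩

/-- Converse part of the paper's Proposition 3.2 (Closure), loop case: if `p` is a prime
with `ν_p(n) ≠ ν_p(m)`, then in every finite quotient of `BS(n,m)` the `p`-adic valuation
of the order of the image of `a` is at most `min (ν_p(n)) (ν_p(m))`. -/
theorem BS_finite_quotient_order_bounded
    (n m : ℤ) (hn : n ≠ 0) (hm : m ≠ 0) (p : ℕ) (hp : p.Prime)
    (hval : padicValNat p n.natAbs ≠ padicValNat p m.natAbs)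
    (Q : Type) [Group Q] [Finite Q] (φ : BS n m →* Q) :
    padicValNat p (orderOf (φ (BS.a n m))) ≤
      min (padicValNat p n.natAbs) (padicValNat p m.natAbs) := by
  have hgcd := (BS.isConj_map_a_zpow φ).gcd_orderOf_natAbs_eq (isOfFinOrder_of_finite _)
  exact padicValNat_le_min_of_gcd_eq hp (orderOf_pos _).ne' (Int.natAbs_ne_zero.mpr hn)
    (Int.natAbs_ne_zero.mpr hm) hgcd.symm hval
end

section
/- Let n and m be nonzero integers and let p be a prime dividing both n and m with ν_p(n) ≠ ν_p(m). Then: (i) there exist a finite group Q and a homomorphism φ : BS(n,m) → Q such that the order of φ(a) is exactly p; and (ii) for every finite group Q' and every homomorphism ψ : BS(n,m) → Q', the p-adic valuation of the order of ψ(a) is at most min(ν_p(n), ν_p(m)). Here a is the first generator of BS(n,m). (Together these say that the closure of ⟨a⟩ in the profinite completion of BS(n,m) has a nontrivial finite p-primary part, so the profinite completion has p-torsion.) -/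
private lemma orderOf_zpow_eq {G : Type*} [Group G] (x : G) (k : ℤ) :
    orderOf (x ^ k) = orderOf (x ^ k.natAbs) := by
  rcases Int.natAbs_eq k with h | h
  · conv_lhs => rw [h, zpow_natCast]
  · conv_lhs => rw [h, zpow_neg, zpow_natCast]
    rw [orderOf_inv]

/-- Finite-quotient content of case (3) of the paper's Theorem 1.1: if a prime `p`
divides both `n` and `m` but with different valuations, then (i) some finite quotient
of `BS(n,m)` maps `a` to an element of order exactly `p`, and (ii) in every finite
quotient the `p`-adic valuation of the order of the image of `a` is at most
`min (ν_p(n)) (ν_p(m))`; hence the profinite completion of `BS(n,m)` has `p`-torsion. -/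
theorem BS_profinite_completion_p_torsion
    (n m : ℤ) (hn : n ≠ 0) (hm : m ≠ 0) (p : ℕ) (hp : p.Prime)
    (hpn : (p : ℤ) ∣ n) (hpm : (p : ℤ) ∣ m)
    (hval : padicValNat p n.natAbs ≠ padicValNat p m.natAbs) :
    (∃ (Q : Type) (_ : Group Q) (_ : Finite Q) (φ : BS n m →* Q),
        orderOf (φ (BS.a n m)) = p) ∧
    (∀ (Q' : Type) (_ : Group Q') (_ : Finite Q') (ψ : BS n m →* Q'),
        padicValNat p (orderOf (ψ (BS.a n m))) ≤
          min (padicValNat p n.natAbs) (padicValNat p m.natAbs)) := by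
  haveI : Fact p.Prime := ⟨hp⟩
  constructor
  · -- part (i)
    refine ⟨Multiplicative (ZMod p), inferInstance, inferInstance, ?_⟩
    set f : Fin 2 → Multiplicative (ZMod p) :=
      fun i => if i = 0 then Multiplicative.ofAdd (1 : ZMod p) else 1 with hf
    have hrel : ∀ r ∈ BSRel n m, FreeGroup.lift f r = 1 := by
      intro r hr
      rcases hr with rfl
      have h0 : (FreeGroup.lift f) (FreeGroup.of (0 : Fin 2)) = Multiplicative.ofAdd (1 : ZMod p) := by
        simp [hf]
      have h1 : (FreeGroup.lift f) (FreeGroup.of (1 : Fin 2)) = 1 := by simp [hf]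
      have key : ∀ k : ℤ, (p : ℤ) ∣ k → (Multiplicative.ofAdd (1 : ZMod p)) ^ k = 1 := by
        intro k hk
        have : (k : ZMod p) = 0 := (ZMod.intCast_zmod_eq_zero_iff_dvd k p).2 hk
        rw [← ofAdd_zero, ← this]
        rw [show (Multiplicative.ofAdd (1 : ZMod p)) ^ k = Multiplicative.ofAdd (k • (1 : ZMod p)) from rfl]
        simp
      simp only [map_mul, map_zpow, map_inv, h0, h1]
      rw [key n hpn, key (-m) (dvd_neg.2 hpm)]
      simp
    refine ⟨PresentedGroup.toGroup hrel, ?_⟩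
    rw [show BS.a n m = PresentedGroup.of 0 from rfl, PresentedGroup.toGroup.of]
    simp only [hf, if_pos rfl]
    rw [orderOf_ofAdd_eq_addOrderOf, ZMod.addOrderOf_one]
  · -- part (ii)
    intro Q' _ _ ψ
    set x := ψ (BS.a n m) with hx
    set t := ψ (PresentedGroup.of (1 : Fin 2)) with ht
    have hrel : x ^ n * t * x ^ (-m) * t⁻¹ = 1 := by
      have h1 : (PresentedGroup.mk (BSRel n m))
          (FreeGroup.of 0 ^ n * FreeGroup.of 1 * FreeGroup.of 0 ^ (-m) * (FreeGroup.of 1)⁻¹) = 1 := by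
        apply (QuotientGroup.eq_one_iff _).2
        exact Subgroup.subset_normalClosure rfl
      simp only [map_mul, map_zpow, map_inv] at h1
      have := congrArg ψ h1
      simp only [map_mul, map_zpow, map_inv, map_one] at this
      exact this
    have hconj : x ^ n = t * x ^ m * t⁻¹ := by
      have : x ^ n * t * x ^ (-m) = t := mul_inv_eq_one.mp hrel
      rw [zpow_neg] at this
      calc x ^ n = (x ^ n * t * (x ^ m)⁻¹) * x ^ m * t⁻¹ := by group
      _ = t * x ^ m * t⁻¹ := by rw [this]
    have hordeq : orderOf (x ^ n) = orderOf (x ^ m) := by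
      rw [hconj]
      have : SemiconjBy t (x ^ m) (t * x ^ m * t⁻¹) := by
        unfold SemiconjBy; group
      exact (this.orderOf_eq t).symm
    rw [orderOf_zpow_eq, orderOf_zpow_eq] at hordeq
    set d := orderOf x with hd
    have hdpos : 0 < d := orderOf_pos x
    rw [orderOf_pow, orderOf_pow] at hordeq
    -- gcd equality
    have hg : Nat.gcd d n.natAbs = Nat.gcd d m.natAbs := by
      have h1 : Nat.gcd d n.natAbs ∣ d := Nat.gcd_dvd_left _ _
      have h2 : Nat.gcd d m.natAbs ∣ d := Nat.gcd_dvd_left _ _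
      have := congrArg (fun k => d / k) hordeq
      rw [Nat.div_div_self h1 hdpos.ne', Nat.div_div_self h2 hdpos.ne'] at this
      exact this
    have hN : n.natAbs ≠ 0 := Int.natAbs_ne_zero.2 hn
    have hM : m.natAbs ≠ 0 := Int.natAbs_ne_zero.2 hm
    have hval1 : padicValNat p (Nat.gcd d n.natAbs)
        = min (padicValNat p d) (padicValNat p n.natAbs) := by
      have := congrFun (congrArg (⇑) (Nat.factorization_gcd hdpos.ne' hN)) p
      simpa [Nat.factorization_def _ hp, Finsupp.inf_apply] using this
    have hval2 : padicValNat p (Nat.gcd d m.natAbs)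
        = min (padicValNat p d) (padicValNat p m.natAbs) := by
      have := congrFun (congrArg (⇑) (Nat.factorization_gcd hdpos.ne' hM)) p
      simpa [Nat.factorization_def _ hp, Finsupp.inf_apply] using this
    have : min (padicValNat p d) (padicValNat p n.natAbs)
        = min (padicValNat p d) (padicValNat p m.natAbs) := by rw [← hval1, ← hval2, hg]
    have hord_dvd : padicValNat p (orderOf (ψ (BS.a n m))) = padicValNat p d := rfl
    rw [hord_dvd]
    omega
end

section
/- Let Γ = Γ((n_i),(m_i)) be a generalised Baumslag–Solitar group over a cycle of length s whose augmentation products n(Ξ) and m(Ξ) are isocratic, and let p be a prime with ν_p(n(Ξ)) = ν_p(m(Ξ)). Then for every index i ∈ {1,…,s} and every natural number l there exist a finite group Q and a homomorphism φ : Γ → Q such that the order of φ(a_i)^{n_i} (the image of the edge-group generator a_i^{n_i}) is exactly p^l. -/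
/-- The relators of a generalised Baumslag–Solitar group over a cycle of length `s`:
generators are `some i` (= `a_{i+1}`) for `i : Fin s` together with the stable letter
`none` (= `t`); the relator indexed by a non-final `i` is `a_i^{n_i} a_{i+1}^{-m_i}`,
and the relator indexed by the final vertex is `t a_s^{n_s} t⁻¹ a_1^{-m_s}`. -/
def cycleRel (s : ℕ) (n m : Fin s → ℤ) (i : Fin s) : FreeGroup (Option (Fin s)) :=
  if h : (i : ℕ) + 1 < s then
    FreeGroup.of (some i) ^ (n i) * FreeGroup.of (some ⟨(i : ℕ) + 1, h⟩) ^ (-(m i))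
  else
    FreeGroup.of none * FreeGroup.of (some i) ^ (n i) * (FreeGroup.of none)⁻¹ *
      FreeGroup.of (some ⟨0, i.pos⟩) ^ (-(m i))

/-- The generalised Baumslag–Solitar group over a cycle of length `s`, with presentation
`⟨a_1,…,a_s, t ∣ a_i^{n_i} = a_{i+1}^{m_i} (1 ≤ i ≤ s−1), t a_s^{n_s} t⁻¹ = a_1^{m_s}⟩`. -/
abbrev GBSCycle (s : ℕ) (n m : Fin s → ℤ) := PresentedGroup (Set.range (cycleRel s n m))

/-- The vertex generator `a_i` of the generalised Baumslag–Solitar group over a cycle. -/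
abbrev GBSCycle.a (s : ℕ) (n m : Fin s → ℤ) (i : Fin s) : GBSCycle s n m :=
  PresentedGroup.of (some i)

/-- Two integers are *isocratic* if every prime dividing both divides them with the same
`p`-adic valuation. -/
def Isocratic (a b : ℤ) : Prop :=
  ∀ p : ℕ, p.Prime → (p : ℤ) ∣ a → (p : ℤ) ∣ b →
    padicValNat p a.natAbs = padicValNat p b.natAbs


/-- Translation permutation. -/
private def addPerm {A : Type} [AddGroup A] (a : A) : Equiv.Perm A where
  toFun x := a + x
  invFun x := -a + x
  left_inv x := by simp
  right_inv x := by simp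

private def addPermHom (A : Type) [AddGroup A] : Multiplicative A →* Equiv.Perm A where
  toFun x := addPerm x.toAdd
  map_one' := by ext y; simp [addPerm]
  map_mul' x y := by ext z; simp [addPerm, Equiv.Perm.mul_apply, add_assoc]

private lemma addPermHom_injective (A : Type) [AddGroup A] :
    Function.Injective (addPermHom A) := by
  intro a b h
  have h0 := congrArg (fun e : Equiv.Perm A => e 0) h
  simpa [addPermHom, addPerm] using h0

private lemma orderOf_addPerm {A : Type} [AddGroup A] (a : A) :
    orderOf (addPerm a) = addOrderOf a := by
  have : addPerm a = addPermHom A (Multiplicative.ofAdd a) := rfl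
  rw [this, orderOf_injective _ (addPermHom_injective A), orderOf_ofAdd_eq_addOrderOf]

private lemma addPerm_zpow {A : Type} [AddGroup A] (a : A) (z : ℤ) :
    addPerm a ^ z = addPerm (z • a) := by
  have : addPerm a = addPermHom A (Multiplicative.ofAdd a) := rfl
  rw [this, ← map_zpow, ← ofAdd_zsmul]
  rfl

private lemma addPerm_zero {A : Type} [AddGroup A] : addPerm (0 : A) = 1 :=
  map_one (addPermHom A)

private lemma addPerm_mul {A : Type} [AddGroup A] (a b : A) :
    addPerm a * addPerm b = addPerm (a + b) :=
  (map_mul (addPermHom A) (Multiplicative.ofAdd a) (Multiplicative.ofAdd b)).symm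

private def unitPerm {N : ℕ} (r : (ZMod N)ˣ) : Equiv.Perm (ZMod N) where
  toFun x := (r : ZMod N) * x
  invFun x := ((r⁻¹ : (ZMod N)ˣ) : ZMod N) * x
  left_inv x := by
    show (r⁻¹ : (ZMod N)ˣ).val * (r.val * x) = x
    rw [← mul_assoc, ← Units.val_mul, inv_mul_cancel, Units.val_one, one_mul]
  right_inv x := by
    show r.val * ((r⁻¹ : (ZMod N)ˣ).val * x) = x
    rw [← mul_assoc, ← Units.val_mul, mul_inv_cancel, Units.val_one, one_mul]

private lemma unitPerm_conj {N : ℕ} (r : (ZMod N)ˣ) (c : ZMod N) :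
    unitPerm r * addPerm c * (unitPerm r)⁻¹ = addPerm ((r : ZMod N) * c) := by
  ext x
  simp only [Equiv.Perm.mul_apply, unitPerm, addPerm, Equiv.coe_fn_mk, Equiv.Perm.inv_def,
    Equiv.coe_fn_symm_mk, mul_add, ← mul_assoc, ← Units.val_mul, mul_inv_cancel, Units.val_one,
    one_mul]

private lemma ord_decomp {p : ℕ} (hp : p.Prime) {a : ℕ} (ha : a ≠ 0) :
    ∃ b : ℕ, a = p ^ padicValNat p a * b ∧ ¬ p ∣ b := by
  haveI : Fact p.Prime := ⟨hp⟩
  refine ⟨a / p ^ padicValNat p a, ?_, ?_⟩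
  · rw [Nat.mul_div_cancel' pow_padicValNat_dvd]
  · intro hdvd
    have h2 : p ^ (padicValNat p a + 1) ∣ a := by
      obtain ⟨c, hc⟩ := hdvd
      refine ⟨c, ?_⟩
      rw [pow_succ, mul_assoc, ← hc, Nat.mul_div_cancel' pow_padicValNat_dvd]
    exact pow_succ_padicValNat_not_dvd ha h2

private lemma addOrderOf_cast_pow {p : ℕ} (hp : p.Prime) (a : ℕ) (ha : a ≠ 0) (l : ℕ) :
    addOrderOf ((a : ZMod (p ^ (l + padicValNat p a)))) = p ^ l := by
  set v := padicValNat p a with hv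
  have hN : p ^ (l + v) ≠ 0 := pow_ne_zero _ hp.pos.ne'
  rw [ZMod.addOrderOf_coe a hN]
  obtain ⟨b, hab, hb⟩ := ord_decomp hp ha
  have hco : Nat.Coprime (p ^ l) b :=
    Nat.Coprime.pow_left l ((Nat.Prime.coprime_iff_not_dvd hp).mpr hb)
  have hgcd : Nat.gcd (p ^ (l + v)) a = p ^ v := by
    rw [hab, add_comm l v, pow_add, Nat.gcd_mul_left, hco.gcd_eq_one, mul_one]
  rw [hgcd, add_comm l v, pow_add, Nat.mul_div_cancel_left _ (pow_pos hp.pos v)]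

private lemma exists_unit_cast {p : ℕ} (hp : p.Prime) (K : ℕ) (z : ℤ) (hz : z ≠ 0) :
    ∃ u : (ZMod (p ^ K))ˣ,
      ((p : ZMod (p ^ K)) ^ padicValNat p z.natAbs) * u = (z : ZMod (p ^ K)) := by
  set a := z.natAbs with hadef
  have ha : a ≠ 0 := Int.natAbs_ne_zero.mpr hz
  obtain ⟨b, hab, hb⟩ := ord_decomp hp (a := a) ha
  have hco : Nat.Coprime b (p ^ K) :=
    Nat.Coprime.pow_right K (((Nat.Prime.coprime_iff_not_dvd hp).mpr hb).symm)
  have hcast : ((p : ZMod (p ^ K)) ^ padicValNat p a) * (ZMod.unitOfCoprime b hco : (ZMod (p ^ K))ˣ)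
      = ((a : ℕ) : ZMod (p ^ K)) := by
    rw [ZMod.coe_unitOfCoprime]
    conv_rhs => rw [hab]
    push_cast
    ring
  rcases Int.natAbs_eq z with h | h
  · exact ⟨ZMod.unitOfCoprime b hco, by rw [hcast, h, Int.cast_natCast]⟩
  · refine ⟨-ZMod.unitOfCoprime b hco, ?_⟩
    rw [Units.val_neg, mul_neg, hcast, h, Int.cast_neg, Int.cast_natCast]

/-- Paper's Lemma 3.1 (Mini_Closure) for cycle graphs: if the augmentation products
`n(Ξ) = ∏ n_i` and `m(Ξ) = ∏ m_i` are isocratic and `p` is a prime with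
`ν_p(n(Ξ)) = ν_p(m(Ξ))`, then for every edge generator `a_i^{n_i}` and every `l` there
is a finite quotient in which its image has order exactly `p^l`. -/
theorem GBSCycle_edge_group_pro_p_quotients
    (s : ℕ) (hs : 0 < s) (n m : Fin s → ℤ)
    (hn : ∀ i, n i ≠ 0) (hm : ∀ i, m i ≠ 0)
    (hiso : Isocratic (∏ j, n j) (∏ j, m j))
    (p : ℕ) (hp : p.Prime)
    (hval : padicValNat p (∏ j, n j).natAbs = padicValNat p (∏ j, m j).natAbs)
    (i : Fin s) (l : ℕ) :
    ∃ (Q : Type) (_ : Group Q) (_ : Finite Q) (φ : GBSCycle s n m →* Q),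
      orderOf (φ (GBSCycle.a s n m i) ^ (n i)) = p ^ l := by
  classical
  set Pn : ℤ := ∏ j, n j with hPndef
  set Pm : ℤ := ∏ j, m j with hPmdef
  set n' : ℕ → ℤ := fun k => if h : k < s then n ⟨k, h⟩ else 1 with hn'def
  set m' : ℕ → ℤ := fun k => if h : k < s then m ⟨k, h⟩ else 1 with hm'def
  have hn'ne : ∀ k, n' k ≠ 0 := by
    intro k; simp only [hn'def]; split <;> simp [hn]
  have hm'ne : ∀ k, m' k ≠ 0 := by
    intro k; simp only [hm'def]; split <;> simp [hm]
  have hn'eq : ∀ j : Fin s, n' (j : ℕ) = n j := by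
    intro j; simp [hn'def, j.isLt]
  have hm'eq : ∀ j : Fin s, m' (j : ℕ) = m j := by
    intro j; simp [hm'def, j.isLt]
  have hPn' : ∏ k ∈ Finset.range s, n' k = Pn := by
    rw [← Fin.prod_univ_eq_prod_range n' s, hPndef]
    exact Finset.prod_congr rfl fun j _ => hn'eq j
  have hPm' : ∏ k ∈ Finset.range s, m' k = Pm := by
    rw [← Fin.prod_univ_eq_prod_range m' s, hPmdef]
    exact Finset.prod_congr rfl fun j _ => hm'eq j
  set X : ℕ → ℤ := fun j => (∏ k ∈ Finset.range j, n' k) * (∏ k ∈ Finset.Ico j s, m' k)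
    with hXdef
  have hX0 : X 0 = Pm := by
    simp only [hXdef, Finset.range_zero, Finset.prod_empty, one_mul]
    rw [← Finset.range_eq_Ico]
    exact hPm'
  have hXne : ∀ j, X j ≠ 0 := fun j =>
    mul_ne_zero (Finset.prod_ne_zero_iff.mpr fun k _ => hn'ne k)
      (Finset.prod_ne_zero_iff.mpr fun k _ => hm'ne k)
  have hstep : ∀ j : ℕ, j + 1 < s → n' j * X j = m' j * X (j + 1) := by
    intro j hj
    have hjs : j < s := Nat.lt_of_succ_lt hj
    simp only [hXdef]
    rw [Finset.prod_eq_prod_Ico_succ_bot hjs m', Finset.prod_range_succ]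
    ring
  have hlast : ∀ j : ℕ, j + 1 = s → n' j * X j = Pn * m' j := by
    intro j hj
    simp only [hXdef]
    have h1 : Finset.Ico j s = {j} := by
      rw [← hj, Nat.Ico_succ_singleton]
    rw [h1, Finset.prod_singleton, ← hPn', ← hj, Finset.prod_range_succ]
    ring
  have hAne : n i * X (i : ℕ) ≠ 0 := mul_ne_zero (hn i) (hXne _)
  set v := padicValNat p (n i * X (i : ℕ)).natAbs with hvdef
  haveI : NeZero (p ^ (l + v)) := ⟨pow_ne_zero _ hp.pos.ne'⟩
  have hPnne : Pn ≠ 0 := Finset.prod_ne_zero_iff.mpr fun j _ => hn j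
  have hPmne : Pm ≠ 0 := Finset.prod_ne_zero_iff.mpr fun j _ => hm j
  obtain ⟨un, hun⟩ := exists_unit_cast hp (l + v) Pn hPnne
  obtain ⟨um, hum⟩ := exists_unit_cast hp (l + v) Pm hPmne
  rw [← hval] at hum
  set r : (ZMod (p ^ (l + v)))ˣ := um * un⁻¹ with hrdef
  have hrPn : (r : ZMod (p ^ (l + v))) * (Pn : ZMod (p ^ (l + v)))
      = (Pm : ZMod (p ^ (l + v))) := by
    rw [← hun, ← hum, hrdef, Units.val_mul]
    have huu : ((un⁻¹ : (ZMod (p ^ (l + v)))ˣ) : ZMod (p ^ (l + v))) * un = 1 := by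
      rw [← Units.val_mul, inv_mul_cancel, Units.val_one]
    calc (um.val * (un⁻¹ : (ZMod (p ^ (l + v)))ˣ).val) *
          ((p : ZMod (p ^ (l + v))) ^ padicValNat p Pn.natAbs * un.val)
        = (p : ZMod (p ^ (l + v))) ^ padicValNat p Pn.natAbs * um.val *
          ((un⁻¹ : (ZMod (p ^ (l + v)))ˣ).val * un.val) := by ring
      _ = (p : ZMod (p ^ (l + v))) ^ padicValNat p Pn.natAbs * um.val := by
          rw [huu, mul_one]
  have hsmul : ∀ (z w : ℤ),
      z • ((w : ZMod (p ^ (l + v)))) = ((z * w : ℤ) : ZMod (p ^ (l + v))) := by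
    intro z w
    rw [zsmul_eq_mul]
    push_cast
    ring
  set f : Option (Fin s) → Equiv.Perm (ZMod (p ^ (l + v))) :=
    fun o => Option.elim o (unitPerm r) (fun j => addPerm ((X (j : ℕ) : ZMod (p ^ (l + v)))))
    with hfdef
  have hf_some : ∀ j : Fin s, f (some j) = addPerm ((X (j : ℕ) : ZMod (p ^ (l + v)))) :=
    fun j => rfl
  have hf_none : f none = unitPerm r := rfl
  have hrel : ∀ rel ∈ Set.range (cycleRel s n m), FreeGroup.lift f rel = 1 := by
    rintro _ ⟨j, rfl⟩
    unfold cycleRel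
    split_ifs with h
    · rw [map_mul, map_zpow, map_zpow, FreeGroup.lift_apply_of, FreeGroup.lift_apply_of, hf_some, hf_some,
        addPerm_zpow, addPerm_zpow, hsmul, hsmul, addPerm_mul]
      have h1 : n j * X (j : ℕ) = m j * X ((j : ℕ) + 1) := by
        have := hstep (j : ℕ) h
        rwa [hn'eq j, hm'eq j] at this
      have key : ((n j * X (j : ℕ) : ℤ) : ZMod (p ^ (l + v)))
          + ((-(m j) * X (((⟨(j : ℕ) + 1, h⟩ : Fin s)) : ℕ) : ℤ) : ZMod (p ^ (l + v))) = 0 := by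
        rw [← Int.cast_add]
        have : n j * X (j : ℕ) + -(m j) * X ((j : ℕ) + 1) = 0 := by linarith
        rw [show (((⟨(j : ℕ) + 1, h⟩ : Fin s)) : ℕ) = (j : ℕ) + 1 from rfl, this, Int.cast_zero]
      rw [key, addPerm_zero]
    · have hj1 : (j : ℕ) + 1 = s := Nat.le_antisymm j.isLt (not_lt.mp h)
      rw [map_mul, map_mul, map_mul, map_inv, map_zpow, map_zpow, FreeGroup.lift_apply_of,
        FreeGroup.lift_apply_of, FreeGroup.lift_apply_of, hf_some, hf_some, hf_none,
        addPerm_zpow, addPerm_zpow, hsmul, hsmul, unitPerm_conj, addPerm_mul]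
      have h1 : n j * X (j : ℕ) = Pn * m j := by
        have := hlast (j : ℕ) hj1
        rwa [hn'eq j, hm'eq j] at this
      have key : (r : ZMod (p ^ (l + v))) * ((n j * X (j : ℕ) : ℤ) : ZMod (p ^ (l + v)))
          + ((-(m j) * X (((⟨0, j.pos⟩ : Fin s)) : ℕ) : ℤ) : ZMod (p ^ (l + v))) = 0 := by
        rw [show (((⟨0, j.pos⟩ : Fin s)) : ℕ) = 0 from rfl, h1, hX0]
        push_cast
        linear_combination ((m j : ℤ) : ZMod (p ^ (l + v))) * hrPn
      rw [key, addPerm_zero]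
  refine ⟨Equiv.Perm (ZMod (p ^ (l + v))), inferInstance, inferInstance,
    PresentedGroup.toGroup hrel, ?_⟩
  rw [show PresentedGroup.toGroup hrel (GBSCycle.a s n m i) = f (some i) from
    PresentedGroup.toGroup.of hrel, hf_some, addPerm_zpow, hsmul, orderOf_addPerm]
  have hAnatne : (n i * X (i : ℕ)).natAbs ≠ 0 := Int.natAbs_ne_zero.mpr hAne
  rcases Int.natAbs_eq (n i * X (i : ℕ)) with hA | hA
  · rw [hA, Int.cast_natCast]
    exact addOrderOf_cast_pow hp _ hAnatne l
  · rw [hA, Int.cast_neg, Int.cast_natCast, addOrderOf_neg]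
    exact addOrderOf_cast_pow hp _ hAnatne l
end

section
/- Let Γ = Γ((n_i),(m_i)) be a generalised Baumslag–Solitar group over a cycle of length s, and suppose p is a prime with 1 ≤ ν_p(m(Ξ)) < ν_p(n(Ξ)), where n(Ξ) and m(Ξ) are the augmentation products. Then: (i) there exist an index i ∈ {1,…,s}, a finite group Q and a homomorphism φ : Γ → Q such that p divides the order of φ(a_i); and (ii) for every index j ∈ {1,…,s}, every finite group Q and every homomorphism φ : Γ → Q, the p-adic valuation of the order of φ(a_j) is strictly less than ν_p(n(Ξ)). (Hence some vertex-group closure in the profinite completion of Γ has nontrivial finite p-primary part; in particular, if the profinite completion of Γ is torsion-free then n(Ξ) and m(Ξ) are isocratic.) -/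
/-!
In a finite quotient, `a_i^{n_i}` and `a_{i+1}^{m_i}` are conjugate, so the valuations
`o_i = ν_p(ord a_i)` satisfy `o_{i+1} ≤ (o_i - ν_p(n_i)) + ν_p(m_i)`. Going once around the cycle
gives `o_i ≤ (o_i - ν_p(n(Ξ))) + ν_p(m(Ξ))`, impossible if `o_i ≥ ν_p(n(Ξ)) > ν_p(m(Ξ))`.

For the finite quotient, pick `k` with `p ∣ m_k` and send `t ↦ 0`, `a_i ↦ c_i ∈ ℤ/p^L` with
`L = ν_p(m(Ξ)) + 1`; this needs `n_i c_i = m_i c_{i+1}`. Reading the cycle from `k + 1`, let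
`c_i` be the product of `n_j` over the `j` before `i` and of `m_j` over the others: it solves
every equation except the one at `k`, which reads `m_k n(Ξ) = m_k m(Ξ)` and holds mod `p^L`
since `p ∣ m_k` and `p^{L-1} ∣ n(Ξ) - m(Ξ)`. Then `a_{k+1} ↦ m(Ξ) ≢ 0` has order divisible by `p`.
-/

open Finset

section Valuation

variable {p : ℕ} [Fact p.Prime]

theorem padicValNat_gcd {a b : ℕ} (ha : a ≠ 0) (hb : b ≠ 0) :
    padicValNat p (a.gcd b) = min (padicValNat p a) (padicValNat p b) := by
  simp only [← Nat.factorization_def _ Fact.out, Nat.factorization_gcd ha hb, Finsupp.inf_apply]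

theorem padicValNat_orderOf_zpow {G : Type*} [Group G] {x : G}
    (hx : IsOfFinOrder x) {c : ℤ} (hc : c ≠ 0) :
    padicValNat p (orderOf (x ^ c)) = padicValNat p (orderOf x) - padicValNat p c.natAbs := by
  have hc' : c.natAbs ≠ 0 := Int.natAbs_ne_zero.mpr hc
  have hxc : orderOf (x ^ c) = orderOf (x ^ c.natAbs) := by
    obtain ⟨k, rfl | rfl⟩ := Int.eq_nat_or_neg c <;> simp [zpow_neg, orderOf_inv]
  rw [hxc, orderOf_pow' x hc', padicValNat.div_of_dvd (Nat.gcd_dvd_left _ _),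
    padicValNat_gcd hx.orderOf_pos.ne' hc']
  omega

theorem padicValNat_natAbs_prod {ι : Type*} (t : Finset ι) {f : ι → ℤ}
    (hf : ∀ i ∈ t, f i ≠ 0) :
    padicValNat p (∏ i ∈ t, f i).natAbs = ∑ i ∈ t, padicValNat p (f i).natAbs := by
  induction t using Finset.cons_induction with
  | empty => simp
  | cons j t hj ih =>
    rw [forall_mem_cons] at hf
    rw [prod_cons, sum_cons, Int.natAbs_mul,
      padicValNat.mul (Int.natAbs_ne_zero.mpr hf.1)
        (Int.natAbs_ne_zero.mpr (prod_ne_zero_iff.mpr hf.2)), ih hf.2]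

theorem ZMod.prime_dvd_addOrderOf_intCast {L : ℕ} {x : ℤ}
    (hx : ¬ ((p ^ L : ℕ) : ℤ) ∣ x) : p ∣ addOrderOf (x : ZMod (p ^ L)) := by
  have hp : p.Prime := Fact.out
  have : NeZero (p ^ L) := ⟨pow_ne_zero _ hp.ne_zero⟩
  have hdvd : addOrderOf (x : ZMod (p ^ L)) ∣ p ^ L := by
    simpa using addOrderOf_dvd_card (x := (x : ZMod (p ^ L)))
  obtain ⟨j, -, hj⟩ := (Nat.dvd_prime_pow hp).mp hdvd
  rw [hj]
  refine dvd_pow_self p fun hj0 => hx ?_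
  rwa [hj0, pow_zero, AddMonoid.addOrderOf_eq_one_iff, ZMod.intCast_zmod_eq_zero_iff_dvd] at hj

end Valuation

theorem Finset.mul_prod_ite_lt_eq_mul_prod_ite_lt_succ {ι R : Type*} [Fintype ι] [CommMonoid R]
    {pos : ι → ℕ} (hpos : Function.Injective pos) (n m : ι → R) (i : ι) :
    n i * ∏ j, (if pos j < pos i then n j else m j) =
      m i * ∏ j, (if pos j < pos i + 1 then n j else m j) := by
  classical
  rw [← mul_prod_erase univ _ (mem_univ i), ← mul_prod_erase univ _ (mem_univ i),
    if_neg (lt_irrefl _), if_pos (Nat.lt_succ_self _), mul_left_comm]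
  congr 2
  refine prod_congr rfl fun j hj => ?_
  have : pos j ≠ pos i := hpos.ne (ne_of_mem_erase hj)
  congr 1
  exact propext (by omega)

theorem Fin.val_add_one_sub_of_add_one_ne {s : ℕ} {i b : Fin (s + 1)} (h : i + 1 ≠ b) :
    ((i + 1 - b : Fin (s + 1)) : ℕ) = (i - b : Fin (s + 1)) + 1 := by
  have hlast : i - b ≠ Fin.last s := fun hib => h <| by
    rw [← sub_eq_zero, ← Fin.last_add_one s, ← hib]; abel
  rw [show i + 1 - b = i - b + 1 by abel, Fin.val_add_one_of_lt (Fin.lt_last_iff_ne_last.mpr hlast)]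

open Fin.NatCast in
theorem Fin.le_tsub_sum_add_sum_of_succ_le {s : ℕ} {u a b : Fin (s + 1) → ℕ}
    (h : ∀ i, u (i + 1) ≤ u i - a i + b i) (j : Fin (s + 1)) :
    u j ≤ u j - ∑ i, a i + ∑ i, b i := by
  have chain : ∀ r : ℕ, u (j + r) ≤
      u j - ∑ t ∈ range r, a (j + t) + ∑ t ∈ range r, b (j + t) := by
    intro r
    induction r with
    | zero => simp
    | succ r ih =>
      have hstep := h (j + r)
      rw [Nat.cast_succ, ← add_assoc, sum_range_succ, sum_range_succ]
      omega
  have reindex (g : Fin (s + 1) → ℕ) : ∑ t ∈ range (s + 1), g (j + t) = ∑ i, g i := by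
    rw [← Fin.sum_univ_eq_sum_range (fun t => g (j + t))]
    simp only [Fin.cast_val_eq_self]
    exact Equiv.sum_comp (Equiv.addLeft j) g
  simpa [reindex] using chain (s + 1)

theorem Fin.exists_mul_eq_mul_succ {s : ℕ} {R : Type*} [CommMonoid R] {n m : Fin (s + 1) → R}
    (k : Fin (s + 1)) (hk : m k * ∏ j, n j = m k * ∏ j, m j) :
    ∃ c : Fin (s + 1) → R, (∀ i, n i * c i = m i * c (i + 1)) ∧ c (k + 1) = ∏ j, m j := by
  set pos : Fin (s + 1) → ℕ := fun j => (j - (k + 1) : Fin (s + 1))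
  have hpos : Function.Injective pos := Fin.val_injective.comp sub_left_injective
  refine ⟨fun i => ∏ j, if pos j < pos i then n j else m j, fun i => ?_, by simp [pos]⟩
  rw [mul_prod_ite_lt_eq_mul_prod_ite_lt_succ hpos]
  by_cases hik : i = k
  · subst hik
    have hlast : pos i + 1 = s + 1 := by simp [pos]
    have hall (j : Fin (s + 1)) : pos j < s + 1 := (j - (i + 1)).isLt
    have hfirst : pos (i + 1) = 0 := by simp [pos]
    simpa only [hlast, hall, hfirst, Nat.not_lt_zero, if_true, if_false] using hk
  · show _ = m i * ∏ j, if pos j < pos (i + 1) then n j else m j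
    rw [show pos (i + 1) = pos i + 1 from
      Fin.val_add_one_sub_of_add_one_ne fun h => hik (add_right_cancel h)]

theorem Int.pow_padicValNat_succ_dvd_mul_sub {p : ℕ} {x M N : ℤ} (hx : (p : ℤ) ∣ x)
    (hMN : padicValNat p M.natAbs ≤ padicValNat p N.natAbs) :
    ((p ^ (padicValNat p M.natAbs + 1) : ℕ) : ℤ) ∣ x * (N - M) := by
  rw [pow_succ', Nat.cast_mul]
  refine mul_dvd_mul hx (dvd_sub (Int.natCast_dvd.mpr ?_) (Int.natCast_dvd.mpr pow_padicValNat_dvd))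
  exact (pow_dvd_pow p hMN).trans pow_padicValNat_dvd

namespace GBSCycle

variable {s : ℕ} {n m : Fin (s + 1) → ℤ}

theorem cycleRel_eq (i : Fin (s + 1)) :
    cycleRel (s + 1) n m i =
      (if i = Fin.last s then FreeGroup.of none else 1) * FreeGroup.of (some i) ^ n i *
        (if i = Fin.last s then FreeGroup.of none else 1)⁻¹ *
          FreeGroup.of (some (i + 1)) ^ (-m i) := by
  unfold cycleRel
  by_cases hi : i = Fin.last s
  · subst hi
    simp [Fin.last_add_one]
  · have hlt : (i : ℕ) + 1 < s + 1 := Nat.succ_lt_succ (Fin.val_lt_last hi)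
    have hnext : (⟨i + 1, hlt⟩ : Fin (s + 1)) = i + 1 :=
      Fin.ext (Fin.val_add_one_of_lt (Fin.lt_last_iff_ne_last.mpr hi)).symm
    simp [hlt, hi, hnext]

theorem exists_semiconjBy (i : Fin (s + 1)) :
    ∃ g : GBSCycle (s + 1) n m,
      SemiconjBy g (a (s + 1) n m i ^ n i) (a (s + 1) n m (i + 1) ^ m i) := by
  have hrel := PresentedGroup.one_of_mem (Set.mem_range_self (f := cycleRel (s + 1) n m) i)
  rw [cycleRel_eq] at hrel
  simp only [map_mul, map_inv, map_zpow, zpow_neg] at hrel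
  exact ⟨_, mul_inv_eq_iff_eq_mul.mp (mul_inv_eq_one.mp hrel)⟩

theorem exists_hom_of_zpow_eq {G : Type*} [Group G] (c : Fin (s + 1) → G)
    (hc : ∀ i, c i ^ n i = c (i + 1) ^ m i) :
    ∃ φ : GBSCycle (s + 1) n m →* G, ∀ i, φ (a (s + 1) n m i) = c i := by
  have hrels : ∀ r ∈ Set.range (cycleRel (s + 1) n m),
      FreeGroup.lift (fun o => o.elim 1 c) r = 1 := by
    rintro _ ⟨i, rfl⟩
    rw [cycleRel_eq]
    split_ifs <;> simp [hc]
  exact ⟨PresentedGroup.toGroup hrels, fun i => PresentedGroup.toGroup.of hrels⟩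

variable {p : ℕ} [Fact p.Prime]

theorem padicValNat_orderOf_succ_le {Q : Type*} [Group Q] [Finite Q]
    (φ : GBSCycle (s + 1) n m →* Q) {i : Fin (s + 1)} (hn : n i ≠ 0) (hm : m i ≠ 0) :
    padicValNat p (orderOf (φ (a (s + 1) n m (i + 1)))) ≤
      padicValNat p (orderOf (φ (a (s + 1) n m i))) - padicValNat p (n i).natAbs +
        padicValNat p (m i).natAbs := by
  obtain ⟨g, hg⟩ := exists_semiconjBy (n := n) (m := m) i
  have hord := congrArg (padicValNat p) (hg.map φ).orderOf_eq
  rw [map_zpow, map_zpow, padicValNat_orderOf_zpow (isOfFinOrder_of_finite _) hn,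
    padicValNat_orderOf_zpow (isOfFinOrder_of_finite _) hm] at hord
  omega

theorem padicValNat_orderOf_lt {Q : Type*} [Group Q] [Finite Q] (hn : ∀ i, n i ≠ 0)
    (hm : ∀ i, m i ≠ 0)
    (hnm : padicValNat p (∏ j, m j).natAbs < padicValNat p (∏ j, n j).natAbs)
    (φ : GBSCycle (s + 1) n m →* Q) (i : Fin (s + 1)) :
    padicValNat p (orderOf (φ (a (s + 1) n m i))) < padicValNat p (∏ j, n j).natAbs := by
  have hcycle := Fin.le_tsub_sum_add_sum_of_succ_le
    (u := fun i => padicValNat p (orderOf (φ (a (s + 1) n m i))))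
    (fun i => padicValNat_orderOf_succ_le φ (hn i) (hm i)) i
  have hN := padicValNat_natAbs_prod (p := p) univ fun j _ => hn j
  have hM := padicValNat_natAbs_prod (p := p) univ fun j _ => hm j
  omega

theorem exists_prime_dvd_orderOf (hm1 : 1 ≤ padicValNat p (∏ j, m j).natAbs)
    (hnm : padicValNat p (∏ j, m j).natAbs < padicValNat p (∏ j, n j).natAbs) :
    ∃ (i : Fin (s + 1)) (Q : Type) (_ : Group Q) (_ : Finite Q) (φ : GBSCycle (s + 1) n m →* Q),
      p ∣ orderOf (φ (a (s + 1) n m i)) := by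
  obtain ⟨k, -, hk⟩ := (Nat.prime_iff_prime_int.mp Fact.out).exists_mem_finset_dvd
    (Int.natCast_dvd.mpr (dvd_of_one_le_padicValNat hm1))
  set L := padicValNat p (∏ j, m j).natAbs + 1
  have : NeZero (p ^ L) := ⟨pow_ne_zero _ (Fact.out : p.Prime).ne_zero⟩
  have hpivot :
      ((m k * ∏ j, m j : ℤ) : ZMod (p ^ L)) = ((m k * ∏ j, n j : ℤ) : ZMod (p ^ L)) := by
    rw [ZMod.intCast_eq_intCast_iff_dvd_sub, ← mul_sub]
    exact Int.pow_padicValNat_succ_dvd_mul_sub hk hnm.le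
  push_cast at hpivot
  obtain ⟨c, hc, hck⟩ := Fin.exists_mul_eq_mul_succ (n := fun i => (n i : ZMod (p ^ L)))
    (m := fun i => (m i : ZMod (p ^ L))) k hpivot.symm
  obtain ⟨φ, hφ⟩ := exists_hom_of_zpow_eq (n := n) (m := m)
    (fun i => Multiplicative.ofAdd (c i)) (fun i => by simp [← ofAdd_zsmul, zsmul_eq_mul, hc])
  refine ⟨k + 1, _, inferInstance, inferInstance, φ, ?_⟩
  rw [hφ, orderOf_ofAdd_eq_addOrderOf, hck, ← Int.cast_prod]
  refine ZMod.prime_dvd_addOrderOf_intCast fun h => ?_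
  have hle := (padicValNat_dvd_iff_le fun h => by simp [h] at hm1).mp (Int.natCast_dvd.mp h)
  omega

end GBSCycle

/-- Finite-quotient content of the paper's Proposition 3.10: if a prime `p` satisfies
`1 ≤ ν_p(m(Ξ)) < ν_p(n(Ξ))` for the augmentation products of the cycle, then (i) some
vertex generator has image of order divisible by `p` in some finite quotient, and
(ii) the `p`-adic valuation of the order of the image of every vertex generator in every
finite quotient is strictly less than `ν_p(n(Ξ))`; hence the profinite completion of `Γ`
has `p`-torsion. -/
theorem GBSCycle_nonisocratic_torsion
    (s : ℕ) (hs : 0 < s) (n m : Fin s → ℤ)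
    (hn : ∀ i, n i ≠ 0) (hm : ∀ i, m i ≠ 0)
    (p : ℕ) (hp : p.Prime)
    (h1 : 1 ≤ padicValNat p (∏ j, m j).natAbs)
    (h2 : padicValNat p (∏ j, m j).natAbs < padicValNat p (∏ j, n j).natAbs) :
    (∃ (i : Fin s) (Q : Type) (_ : Group Q) (_ : Finite Q) (φ : GBSCycle s n m →* Q),
        p ∣ orderOf (φ (GBSCycle.a s n m i))) ∧
    (∀ (i : Fin s) (Q : Type) (_ : Group Q) (_ : Finite Q) (φ : GBSCycle s n m →* Q),
        padicValNat p (orderOf (φ (GBSCycle.a s n m i))) <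
          padicValNat p (∏ j, n j).natAbs) := by
  obtain ⟨s, rfl⟩ := Nat.exists_eq_add_one_of_ne_zero hs.ne'
  have : Fact p.Prime := ⟨hp⟩
  exact ⟨GBSCycle.exists_prime_dvd_orderOf h1 h2,
    fun i Q _ _ φ => GBSCycle.padicValNat_orderOf_lt hn hm h2 φ i⟩
end

section
/- Let Γ = Γ((n_i),(m_i)) be a generalised Baumslag–Solitar group over a cycle of length s with augmentation products n(Ξ) and m(Ξ). Then |n(Ξ)| = |m(Ξ)| if and only if for every index i ∈ {1,…,s} and every positive integer k there exist a finite group Q and a homomorphism φ : Γ → Q such that k divides the order of φ(a_i). (The latter condition says exactly that Γ induces the full profinite topology on each of its vertex groups ⟨a_i⟩.) -/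
/-! ### Auxiliary number theory -/

namespace GBSAux

lemma exists_j' {α β v : ℕ} (hab : α < β) (hv : α * β + 1 ≤ v) :
    ∃ j : ℕ, j * α < v ∧ v ≤ j * β := by
  have h := Nat.div_add_mod (v - 1) β
  have hr := Nat.mod_lt (v - 1) (show 0 < β by omega)
  set q := (v - 1) / β with hq
  set r := (v - 1) % β with hrdef
  have hv' : v = q * β + r + 1 := by rw [mul_comm]; omega
  refine ⟨q + 1, ?_, by nlinarith⟩
  by_cases hqa : α ≤ q
  · nlinarith [Nat.mul_le_mul_left q (Nat.succ_le_of_lt hab)]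
  · exfalso
    nlinarith [Nat.mul_le_mul_right β (show q + 1 ≤ α by omega)]

lemma gcd_ne_of_lt {N M : ℕ} (hN : N ≠ 0) (hM : M ≠ 0) {p : ℕ} (hp : p.Prime)
    (hlt : N.factorization p < M.factorization p) :
    ∃ k, 0 < k ∧ ∀ d : ℕ, d ≠ 0 → k ∣ d →
      ∃ j : ℕ, Nat.gcd d (N ^ j) ≠ Nat.gcd d (M ^ j) := by
  set α := N.factorization p with hα
  set β := M.factorization p with hβ
  refine ⟨p ^ (α * β + 1), pow_pos hp.pos _, fun d hd hkd => ?_⟩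
  have hv : α * β + 1 ≤ d.factorization p :=
    (Nat.Prime.pow_dvd_iff_le_factorization hp hd).1 hkd
  set v := d.factorization p with hvdef
  obtain ⟨j, hja, hjb⟩ := exists_j' hlt hv
  refine ⟨j, fun hgcd => ?_⟩
  have h1 : p ^ v ∣ d := Nat.ordProj_dvd d p
  have h2 : p ^ v ∣ M ^ j := by
    rw [Nat.Prime.pow_dvd_iff_le_factorization hp (pow_ne_zero j hM),
      Nat.factorization_pow, Finsupp.smul_apply, smul_eq_mul]
    exact hjb
  have h3 : p ^ v ∣ N ^ j := by
    have h4 := Nat.dvd_gcd h1 h2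
    rw [← hgcd] at h4
    exact h4.trans (Nat.gcd_dvd_right _ _)
  have h5 : v ≤ j * α := by
    have h6 := (Nat.Prime.pow_dvd_iff_le_factorization hp (pow_ne_zero j hN)).1 h3
    rwa [Nat.factorization_pow, Finsupp.smul_apply, smul_eq_mul] at h6
  omega

lemma orderOf_zpow'' {G : Type*} [Group G] (g : G) (z : ℤ) :
    orderOf (g ^ z) = orderOf (g ^ z.natAbs) := by
  rcases Int.natAbs_eq z with h | h
  · conv_lhs => rw [h]
    rw [zpow_natCast]
  · conv_lhs => rw [h]
    rw [zpow_neg, zpow_natCast, orderOf_inv]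

/-! ### Dihedral group facts -/

lemma rHom_def (N : ℕ) : ∃ f : Multiplicative (ZMod N) →* DihedralGroup N,
    (∀ x : ZMod N, f (Multiplicative.ofAdd x) = DihedralGroup.r x) ∧ Function.Injective f := by
  refine ⟨MonoidHom.mk' (fun x => DihedralGroup.r x.toAdd)
    (fun x y => (DihedralGroup.r_mul_r _ _).symm), fun x => rfl, ?_⟩
  intro x y h
  simpa [DihedralGroup.r.injEq] using h

lemma r_zpow (N : ℕ) (x : ZMod N) (z : ℤ) :
    (DihedralGroup.r x) ^ z = DihedralGroup.r ((z : ZMod N) * x) := by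
  obtain ⟨f, hf, -⟩ := rHom_def N
  have h1 : (DihedralGroup.r x) ^ z = f ((Multiplicative.ofAdd x) ^ z) := by
    rw [map_zpow, hf]
  rw [h1]
  have h2 : (Multiplicative.ofAdd x) ^ z = Multiplicative.ofAdd (z • x) := rfl
  rw [h2, hf, zsmul_eq_mul]

lemma orderOf_r (N : ℕ) (x : ZMod N) :
    orderOf (DihedralGroup.r x) = addOrderOf x := by
  obtain ⟨f, hf, hinj⟩ := rHom_def N
  rw [← hf, orderOf_injective f hinj, orderOf_ofAdd_eq_addOrderOf]

lemma sr_conj (N : ℕ) (y : ZMod N) :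
    DihedralGroup.sr 0 * DihedralGroup.r y * (DihedralGroup.sr 0)⁻¹ = DihedralGroup.r (-y) := by
  have hinv : (DihedralGroup.sr (0 : ZMod N))⁻¹ = DihedralGroup.sr 0 :=
    inv_eq_of_mul_eq_one_right (DihedralGroup.sr_mul_self 0)
  rw [hinv, DihedralGroup.sr_mul_r, DihedralGroup.sr_mul_sr, zero_add, zero_sub]

lemma addOrderOf_int (N : ℕ) (hN : N ≠ 0) (z : ℤ) :
    addOrderOf ((z : ZMod N)) = N / N.gcd z.natAbs := by
  rcases Int.natAbs_eq z with h | h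
  · conv_lhs => rw [h]
    rw [Int.cast_natCast, ZMod.addOrderOf_coe _ hN]
  · conv_lhs => rw [h]
    rw [Int.cast_neg, addOrderOf_neg, Int.cast_natCast, ZMod.addOrderOf_coe _ hN]

/-! ### Relations in the presented group -/

variable (s : ℕ) (n m : Fin s → ℤ)

/-- extension of `n : Fin s → ℤ` to `ℕ` by `1` -/
def ext (l : ℕ) : ℤ := if h : l < s then n ⟨l, h⟩ else 1

lemma ext_lt {l : ℕ} (h : l < s) : ext s n l = n ⟨l, h⟩ := dif_pos h

lemma ext_ne (hn : ∀ i, n i ≠ 0) (l : ℕ) : ext s n l ≠ 0 := by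
  unfold ext; split <;> simp [hn _]

lemma prod_ext : ∏ l ∈ Finset.range s, ext s n l = ∏ j, n j := by
  rw [← Fin.prod_univ_eq_prod_range]
  exact Finset.prod_congr rfl fun j _ => by rw [ext_lt s n j.isLt]

def proj : FreeGroup (Option (Fin s)) →* GBSCycle s n m :=
  QuotientGroup.mk' (Subgroup.normalClosure (Set.range (cycleRel s n m)))

lemma proj_of (x : Option (Fin s)) : proj s n m (FreeGroup.of x) = PresentedGroup.of x := rfl

lemma proj_rel (i : Fin s) : proj s n m (cycleRel s n m i) = 1 := by
  exact (QuotientGroup.eq_one_iff _).mpr (Subgroup.subset_normalClosure ⟨i, rfl⟩)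

lemma rel_lt (i : Fin s) (h : (i : ℕ) + 1 < s) :
    GBSCycle.a s n m i ^ n i = GBSCycle.a s n m ⟨(i : ℕ) + 1, h⟩ ^ m i := by
  have := proj_rel s n m i
  rw [cycleRel, dif_pos h, map_mul, map_zpow, map_zpow, proj_of, proj_of,
    zpow_neg, mul_inv_eq_one] at this
  exact this

lemma rel_last (i : Fin s) (h : ¬ ((i : ℕ) + 1 < s)) :
    PresentedGroup.of (rels := Set.range (cycleRel s n m)) none *
      GBSCycle.a s n m i ^ n i * (PresentedGroup.of none)⁻¹ =
    GBSCycle.a s n m ⟨0, i.pos⟩ ^ m i := by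
  have := proj_rel s n m i
  rw [cycleRel, dif_neg h, map_mul, map_mul, map_mul, map_zpow, map_zpow, map_inv,
    proj_of, proj_of, proj_of, zpow_neg, mul_inv_eq_one] at this
  exact this

lemma chain (hs : 0 < s) : ∀ j : ℕ, ∀ hj : j < s, ∀ x : ℤ,
    GBSCycle.a s n m ⟨0, hs⟩ ^ ((∏ l ∈ Finset.range j, ext s n l) * x)
      = GBSCycle.a s n m ⟨j, hj⟩ ^ ((∏ l ∈ Finset.range j, ext s m l) * x) := by
  intro j
  induction j with
  | zero => intro hj x; simp
  | succ j ih =>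
    intro hj x
    have hjs : j < s := by omega
    calc GBSCycle.a s n m ⟨0, hs⟩ ^ ((∏ l ∈ Finset.range (j+1), ext s n l) * x)
        = GBSCycle.a s n m ⟨0, hs⟩ ^ ((∏ l ∈ Finset.range j, ext s n l) * (n ⟨j, hjs⟩ * x)) := by
          rw [Finset.prod_range_succ, ext_lt s n hjs]; ring_nf
      _ = GBSCycle.a s n m ⟨j, hjs⟩ ^ ((∏ l ∈ Finset.range j, ext s m l) * (n ⟨j, hjs⟩ * x)) :=
          ih hjs _
      _ = GBSCycle.a s n m ⟨j+1, hj⟩ ^ ((∏ l ∈ Finset.range (j+1), ext s m l) * x) := by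
          rw [show (∏ l ∈ Finset.range j, ext s m l) * (n ⟨j, hjs⟩ * x)
              = n ⟨j, hjs⟩ * ((∏ l ∈ Finset.range j, ext s m l) * x) by ring,
            zpow_mul, rel_lt s n m ⟨j, hjs⟩ hj, ← zpow_mul,
            Finset.prod_range_succ, ext_lt s m hjs]
          ring_nf

lemma key (hs : 0 < s) :
    PresentedGroup.of (rels := Set.range (cycleRel s n m)) none *
      GBSCycle.a s n m ⟨0, hs⟩ ^ (∏ j, n j) * (PresentedGroup.of none)⁻¹ =
    GBSCycle.a s n m ⟨0, hs⟩ ^ (∏ j, m j) := by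
  have hlast : ¬ ((s - 1) + 1 < s) := by omega
  have hs1 : s - 1 < s := by omega
  have h1 := rel_last s n m ⟨s - 1, hs1⟩ hlast
  set Q : ℤ := ∏ l ∈ Finset.range (s-1), ext s m l with hQ
  have h2 := congrArg (· ^ Q) h1
  simp only [conj_zpow, ← zpow_mul] at h2
  have h3 := chain s n m hs (s-1) hs1 (n ⟨s-1, hs1⟩)
  rw [show n (⟨s-1, hs1⟩ : Fin s) * Q = Q * n ⟨s-1, hs1⟩ by ring, ← h3] at h2
  have hss : s - 1 + 1 = s := by omega
  have hrr : Finset.range s = Finset.range (s - 1 + 1) := by rw [hss]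
  have e1 : (∏ l ∈ Finset.range (s-1), ext s n l) * n ⟨s-1, hs1⟩ = ∏ j, n j := by
    rw [← prod_ext s n, hrr, Finset.prod_range_succ, ext_lt s n hs1]
  have e2 : m (⟨s-1, hs1⟩ : Fin s) * Q = ∏ j, m j := by
    rw [hQ, mul_comm, ← prod_ext s m, hrr, Finset.prod_range_succ, ext_lt s m hs1]
  rw [e1, e2] at h2
  have heq : (⟨0, Fin.pos ⟨s-1, hs1⟩⟩ : Fin s) = ⟨0, hs⟩ := rfl
  rw [heq] at h2
  exact h2

/-! ### The vertex-exponent sequence for the forward direction -/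

def Xv (j : ℕ) : ℤ :=
  (∏ l ∈ Finset.range j, ext s n l) * (∏ l ∈ Finset.Ico j s, ext s m l)

lemma Xv_rel {j : ℕ} (hj : j < s) :
    ext s n j * Xv s n m j = ext s m j * Xv s n m (j+1) := by
  unfold Xv
  rw [Finset.prod_range_succ, Finset.prod_eq_prod_Ico_succ_bot hj (ext s m)]
  ring

lemma Xv_zero : Xv s n m 0 = ∏ j, m j := by
  unfold Xv
  rw [Finset.range_zero, Finset.prod_empty, one_mul, ← Finset.range_eq_Ico, prod_ext]

lemma Xv_s : Xv s n m s = ∏ j, n j := by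
  unfold Xv
  rw [Finset.Ico_self, Finset.prod_empty, mul_one, prod_ext]

lemma Xv_ne (hn : ∀ i, n i ≠ 0) (hm : ∀ i, m i ≠ 0) (j : ℕ) : Xv s n m j ≠ 0 :=
  mul_ne_zero (Finset.prod_ne_zero_iff.2 fun l _ => ext_ne s n hn l)
    (Finset.prod_ne_zero_iff.2 fun l _ => ext_ne s m hm l)

end GBSAux

open GBSAux in
/-- Paper's Lemma 5.2 restricted to cycle graphs: the augmentation products satisfy
`|n(Ξ)| = |m(Ξ)|` if and only if `Γ` induces the full profinite topology on each vertex
group `⟨a_i⟩`, i.e. every positive integer `k` divides the order of the image of `a_i`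
in some finite quotient of `Γ`. -/
theorem GBSCycle_full_topology_iff_abs_eq
    (s : ℕ) (hs : 0 < s) (n m : Fin s → ℤ)
    (hn : ∀ i, n i ≠ 0) (hm : ∀ i, m i ≠ 0) :
    (∏ j, n j).natAbs = (∏ j, m j).natAbs ↔
      ∀ (i : Fin s) (k : ℕ), 0 < k →
        ∃ (Q : Type) (_ : Group Q) (_ : Finite Q) (φ : GBSCycle s n m →* Q),
          k ∣ orderOf (φ (GBSCycle.a s n m i)) := by
  have hN0 : (∏ j, n j) ≠ 0 := Finset.prod_ne_zero_iff.2 fun j _ => hn j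
  have hM0 : (∏ j, m j) ≠ 0 := Finset.prod_ne_zero_iff.2 fun j _ => hm j
  constructor
  · -- forward direction: construct dihedral quotients
    intro h i k hk
    have hXne : Xv s n m i.1 ≠ 0 := Xv_ne s n m hn hm i.1
    set A : ℕ := (Xv s n m i.1).natAbs with hA
    have hA0 : 0 < A := Int.natAbs_pos.2 hXne
    set NN : ℕ := k * A with hNN
    have hNN0 : NN ≠ 0 := by positivity
    haveI : NeZero NN := ⟨hNN0⟩
    set f : Option (Fin s) → DihedralGroup NN := fun o =>
      o.elim (if (∏ j, n j) = (∏ j, m j) then 1 else DihedralGroup.sr 0)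
        (fun j => DihedralGroup.r ((Xv s n m j.1 : ℤ) : ZMod NN)) with hf
    have hrel : ∀ r ∈ Set.range (cycleRel s n m), FreeGroup.lift f r = 1 := by
      rintro _ ⟨i', rfl⟩
      rw [cycleRel]
      by_cases h' : (i' : ℕ) + 1 < s
      · rw [dif_pos h', map_mul, map_zpow, map_zpow, FreeGroup.lift_apply_of, FreeGroup.lift_apply_of]
        show (DihedralGroup.r _) ^ (n i') * (DihedralGroup.r _) ^ (-(m i')) = 1
        rw [r_zpow, r_zpow, DihedralGroup.r_mul_r, DihedralGroup.one_def]
        have hk1 : (n i') * Xv s n m i'.1 = (m i') * Xv s n m (i'.1 + 1) := by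
          have := Xv_rel s n m i'.isLt
          rwa [ext_lt s n i'.isLt, ext_lt s m i'.isLt] at this
        congr 1
        have := congrArg (fun z : ℤ => (z : ZMod NN)) hk1
        push_cast at this ⊢
        linear_combination this
      · rw [dif_neg h', map_mul, map_mul, map_mul, map_zpow, map_zpow, map_inv,
          FreeGroup.lift_apply_of, FreeGroup.lift_apply_of, FreeGroup.lift_apply_of]
        have hi's : i'.1 + 1 = s := by omega
        have hk1 : (n i') * Xv s n m i'.1 = (m i') * (∏ j, n j) := by
          have := Xv_rel s n m i'.isLt
          rw [ext_lt s n i'.isLt, ext_lt s m i'.isLt, hi's, Xv_s] at this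
          exact this
        by_cases hNM : (∏ j, n j) = (∏ j, m j)
        · show (if (∏ j, n j) = (∏ j, m j) then (1 : DihedralGroup NN) else DihedralGroup.sr 0) *
              (DihedralGroup.r ((Xv s n m i'.1 : ℤ) : ZMod NN)) ^ (n i') *
              (if (∏ j, n j) = (∏ j, m j) then (1 : DihedralGroup NN) else DihedralGroup.sr 0)⁻¹ *
              (DihedralGroup.r ((Xv s n m 0 : ℤ) : ZMod NN)) ^ (-(m i')) = 1
          rw [if_pos hNM, one_mul, inv_one, mul_one, r_zpow, r_zpow,
            DihedralGroup.r_mul_r, DihedralGroup.one_def]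
          have hk2 : (n i') * Xv s n m i'.1 = (m i') * Xv s n m 0 := by
            rw [hk1, Xv_zero, hNM]
          congr 1
          have := congrArg (fun z : ℤ => (z : ZMod NN)) hk2
          push_cast at this ⊢
          linear_combination this
        · have hNM' : (∏ j, n j) = -(∏ j, m j) :=
            (Int.natAbs_eq_natAbs_iff.1 h).resolve_left hNM
          show (if (∏ j, n j) = (∏ j, m j) then (1 : DihedralGroup NN) else DihedralGroup.sr 0) *
              (DihedralGroup.r ((Xv s n m i'.1 : ℤ) : ZMod NN)) ^ (n i') *
              (if (∏ j, n j) = (∏ j, m j) then (1 : DihedralGroup NN) else DihedralGroup.sr 0)⁻¹ *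
              (DihedralGroup.r ((Xv s n m 0 : ℤ) : ZMod NN)) ^ (-(m i')) = 1
          rw [if_neg hNM, r_zpow, r_zpow, sr_conj, DihedralGroup.r_mul_r,
            DihedralGroup.one_def]
          have hk2 : -((n i') * Xv s n m i'.1) = (m i') * Xv s n m 0 := by
            rw [hk1, Xv_zero, hNM']; ring
          congr 1
          have := congrArg (fun z : ℤ => (z : ZMod NN)) hk2
          push_cast at this ⊢
          linear_combination this
    refine ⟨DihedralGroup NN, inferInstance, inferInstance, PresentedGroup.toGroup hrel, ?_⟩
    have hφ : (PresentedGroup.toGroup hrel) (GBSCycle.a s n m i) = f (some i) :=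
      PresentedGroup.toGroup.of hrel
    rw [hφ]
    show k ∣ orderOf (DihedralGroup.r ((Xv s n m i.1 : ℤ) : ZMod NN))
    rw [orderOf_r, addOrderOf_int NN hNN0, ← hA]
    have hg : NN.gcd A = A := Nat.gcd_eq_right ⟨k, by rw [hNN, mul_comm]⟩
    rw [hg, hNN, Nat.mul_div_cancel _ hA0]
  · -- backward direction
    intro hfull
    by_contra hne
    set N' : ℕ := (∏ j, n j).natAbs with hN'
    set M' : ℕ := (∏ j, m j).natAbs with hM'
    have hN'0 : N' ≠ 0 := Int.natAbs_ne_zero.2 hN0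
    have hM'0 : M' ≠ 0 := Int.natAbs_ne_zero.2 hM0
    -- find a prime where the factorizations differ
    have hfa : N'.factorization ≠ M'.factorization := fun hh =>
      hne (Nat.factorization_inj hN'0 hM'0 hh)
    have hexp : ∃ p, N'.factorization p ≠ M'.factorization p := by
      by_contra hc
      push_neg at hc
      exact hfa (Finsupp.ext hc)
    obtain ⟨p, hp⟩ := hexp
    have hpp : p.Prime := by
      by_contra hnp
      rw [Nat.factorization_eq_zero_of_not_prime _ hnp,
        Nat.factorization_eq_zero_of_not_prime _ hnp] at hp
      exact hp rfl
    -- get k from the number-theoretic lemma (two symmetric cases)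
    obtain ⟨k, hk, hgd⟩ :
        ∃ k, 0 < k ∧ ∀ d : ℕ, d ≠ 0 → k ∣ d →
          ∃ j : ℕ, Nat.gcd d (N' ^ j) ≠ Nat.gcd d (M' ^ j) := by
      rcases hp.lt_or_gt with hlt | hlt
      · exact gcd_ne_of_lt hN'0 hM'0 hpp hlt
      · obtain ⟨k, hk, hgd⟩ := gcd_ne_of_lt hM'0 hN'0 hpp hlt
        exact ⟨k, hk, fun d hd hkd => (hgd d hd hkd).imp fun j hj => hj.symm⟩
    obtain ⟨Q, _, _, φ, hdvd⟩ := hfull ⟨0, hs⟩ k hk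
    set g : Q := φ (GBSCycle.a s n m ⟨0, hs⟩) with hg
    set τ : Q := φ (PresentedGroup.of none) with hτ
    have hk1 : τ * g ^ (∏ j, n j) * τ⁻¹ = g ^ (∏ j, m j) := by
      have := congrArg φ (key s n m hs)
      simpa [map_mul, map_zpow, map_inv] using this
    have hiter : ∀ j : ℕ, τ ^ j * g ^ ((∏ j, n j) ^ j) * (τ ^ j)⁻¹ = g ^ ((∏ j, m j) ^ j) := by
      intro j
      induction j with
      | zero => simp
      | succ j ih =>
        calc τ ^ (j+1) * g ^ ((∏ j, n j) ^ (j+1)) * (τ ^ (j+1))⁻¹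
            = τ ^ j * (τ * g ^ ((∏ j, n j) ^ (j+1)) * τ⁻¹) * (τ ^ j)⁻¹ := by
              rw [pow_succ]; group
          _ = τ ^ j * (τ * g ^ (∏ j, n j) * τ⁻¹) ^ ((∏ j, n j) ^ j) * (τ ^ j)⁻¹ := by
              rw [conj_zpow, ← zpow_mul, ← pow_succ']
          _ = τ ^ j * (g ^ (∏ j, m j)) ^ ((∏ j, n j) ^ j) * (τ ^ j)⁻¹ := by rw [hk1]
          _ = τ ^ j * (g ^ ((∏ j, n j) ^ j)) ^ (∏ j, m j) * (τ ^ j)⁻¹ := by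
              rw [← zpow_mul, ← zpow_mul, mul_comm]
          _ = (τ ^ j * g ^ ((∏ j, n j) ^ j) * (τ ^ j)⁻¹) ^ (∏ j, m j) := by
              rw [conj_zpow]
          _ = (g ^ ((∏ j, m j) ^ j)) ^ (∏ j, m j) := by rw [ih]
          _ = g ^ ((∏ j, m j) ^ (j+1)) := by rw [← zpow_mul, ← pow_succ]
    have hord : ∀ j : ℕ, orderOf (g ^ ((∏ j, n j) ^ j)) = orderOf (g ^ ((∏ j, m j) ^ j)) := by
      intro j
      rw [← hiter j]
      have : τ ^ j * g ^ ((∏ j, n j) ^ j) * (τ ^ j)⁻¹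
          = (MulAut.conj (τ ^ j)) (g ^ ((∏ j, n j) ^ j)) := by
        rw [MulAut.conj_apply]
      rw [this, MulEquiv.orderOf_eq]
    set d : ℕ := orderOf g with hd
    have hd0 : d ≠ 0 := (orderOf_pos g).ne'
    obtain ⟨j, hj⟩ := hgd d hd0 hdvd
    apply hj
    have h1 := hord j
    rw [orderOf_zpow'', orderOf_zpow''] at h1
    rw [orderOf_pow, orderOf_pow, Int.natAbs_pow, Int.natAbs_pow, ← hN', ← hM', ← hd] at h1
    -- h1 : d / gcd d (N'^j) = d / gcd d (M'^j)
    have e1 : Nat.gcd d (N' ^ j) = d / (d / Nat.gcd d (N' ^ j)) :=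
      (Nat.div_div_self (Nat.gcd_dvd_left _ _) hd0).symm
    have e2 : Nat.gcd d (M' ^ j) = d / (d / Nat.gcd d (M' ^ j)) :=
      (Nat.div_div_self (Nat.gcd_dvd_left _ _) hd0).symm
    rw [e1, e2, h1]
end

section
/- Let s ≥ 1 and let n_1,…,n_{s−1} and m_1,…,m_{s−1} be nonzero integers, and let Γ be the group with presentation ⟨a_1,…,a_s | a_i^{n_i} = a_{i+1}^{m_i} for 1 ≤ i ≤ s−1⟩ (a generalised Baumslag–Solitar group over a path, i.e. over a tree). Then for every index i ∈ {1,…,s} and every positive integer k there exist a finite group Q and a homomorphism φ : Γ → Q such that k divides the order of φ(a_i). (That is, Γ induces the full profinite topology on each of its vertex groups ⟨a_i⟩.) -/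
/-- The relators of a generalised Baumslag–Solitar group over a path with `s + 1`
vertices `a_1, …, a_{s+1}` and `s` edges: the relator indexed by `i : Fin s` is
`a_i^{n_i} a_{i+1}^{-m_i}`. -/
def pathRel (s : ℕ) (n m : Fin s → ℤ) (i : Fin s) : FreeGroup (Fin (s + 1)) :=
  FreeGroup.of i.castSucc ^ (n i) * FreeGroup.of i.succ ^ (-(m i))

/-- The generalised Baumslag–Solitar group over a path (a tree), with presentation
`⟨a_1, …, a_{s+1} ∣ a_i^{n_i} = a_{i+1}^{m_i} for 1 ≤ i ≤ s⟩`. -/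
abbrev GBSPath (s : ℕ) (n m : Fin s → ℤ) := PresentedGroup (Set.range (pathRel s n m))

/-- The vertex generator `a_i` of the generalised Baumslag–Solitar group over a path. -/
abbrev GBSPath.a (s : ℕ) (n m : Fin s → ℤ) (i : Fin (s + 1)) : GBSPath s n m :=
  PresentedGroup.of i

/-- The labelling of the vertices: `e j = (∏_{l < j} n l) * (∏_{l ≥ j} m l)`. -/
def gbsE (s : ℕ) (n m : Fin s → ℤ) (j : Fin (s + 1)) : ℤ :=
  ∏ l : Fin s, (if (l : ℕ) < (j : ℕ) then n l else m l)

lemma gbsE_ne_zero (s : ℕ) (n m : Fin s → ℤ)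
    (hn : ∀ i, n i ≠ 0) (hm : ∀ i, m i ≠ 0) (j : Fin (s + 1)) :
    gbsE s n m j ≠ 0 := by
  apply Finset.prod_ne_zero_iff.2
  intro l _
  split <;> [exact hn l; exact hm l]

lemma gbsE_rel (s : ℕ) (n m : Fin s → ℤ) (i : Fin s) :
    n i * gbsE s n m i.castSucc = m i * gbsE s n m i.succ := by
  unfold gbsE
  rw [← Finset.mul_prod_erase Finset.univ _ (Finset.mem_univ i),
      ← Finset.mul_prod_erase Finset.univ _ (Finset.mem_univ i)]
  simp only [Fin.coe_castSucc, Fin.val_succ, lt_irrefl, if_neg, Nat.lt_succ_self, if_pos,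
    lt_self_iff_false, ite_false, ite_true]
  rw [← mul_assoc, ← mul_assoc, mul_comm (n i) (m i)]
  congr 1
  apply Finset.prod_congr rfl
  intro l hl
  have hne : (l : ℕ) ≠ (i : ℕ) := by
    simpa [Fin.val_injective.ne_iff] using (Finset.mem_erase.1 hl).1
  have : (l : ℕ) < (i : ℕ) + 1 ↔ (l : ℕ) < (i : ℕ) := by omega
  simp [this]

/-- Tree case of the paper's Lemma 5.2: a generalised Baumslag–Solitar group over a path
induces the full profinite topology on each vertex group `⟨a_i⟩`: every positive integer
`k` divides the order of the image of `a_i` in some finite quotient. -/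
theorem GBSPath_full_topology_on_vertex_groups
    (s : ℕ) (n m : Fin s → ℤ)
    (hn : ∀ i, n i ≠ 0) (hm : ∀ i, m i ≠ 0)
    (i : Fin (s + 1)) (k : ℕ) (hk : 0 < k) :
    ∃ (Q : Type) (_ : Group Q) (_ : Finite Q) (φ : GBSPath s n m →* Q),
      k ∣ orderOf (φ (GBSPath.a s n m i)) := by
  set e := gbsE s n m with he
  have hez : ∀ j, e j ≠ 0 := gbsE_ne_zero s n m hn hm
  set E : ℕ := (e i).natAbs with hE
  have hEpos : 0 < E := Int.natAbs_pos.2 (hez i)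
  set N : ℕ := k * E with hN
  have hNpos : 0 < N := Nat.mul_pos hk hEpos
  haveI : NeZero N := ⟨hNpos.ne'⟩
  refine ⟨Multiplicative (ZMod N), inferInstance, inferInstance, ?_⟩
  have key : ∀ r ∈ Set.range (pathRel s n m),
      FreeGroup.lift (fun j => Multiplicative.ofAdd ((e j : ZMod N))) r = 1 := by
    rintro r ⟨j, rfl⟩
    have hrel : n j * e j.castSucc = m j * e j.succ := gbsE_rel s n m j
    simp only [pathRel, map_mul, map_zpow, FreeGroup.lift_apply_of]
    rw [← ofAdd_zsmul, ← ofAdd_zsmul, ← ofAdd_add]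
    have : (n j • (e j.castSucc : ZMod N)) + (-(m j) • (e j.succ : ZMod N)) = 0 := by
      rw [zsmul_eq_mul, zsmul_eq_mul, ← Int.cast_mul, ← Int.cast_mul, ← Int.cast_add,
        neg_mul, hrel]
      simp
    rw [this]
    rfl
  refine ⟨PresentedGroup.toGroup key, ?_⟩
  have hφ : (PresentedGroup.toGroup key) (GBSPath.a s n m i)
      = Multiplicative.ofAdd ((e i : ZMod N)) := PresentedGroup.toGroup.of key
  rw [hφ]
  have h1 : orderOf (Multiplicative.ofAdd ((e i : ZMod N))) = addOrderOf ((e i : ZMod N)) := by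
    simp
  rw [h1]
  have h2 : ((e i : ZMod N)) = (((e i).natAbs : ZMod N)) ∨
      ((e i : ZMod N)) = -(((e i).natAbs : ZMod N)) := by
    rcases Int.natAbs_eq (e i) with h | h
    · left; rw [h]; exact Int.cast_natCast _
    · right
      conv_lhs => rw [h]
      rw [Int.cast_neg, Int.cast_natCast]
  have h3 : addOrderOf ((e i : ZMod N)) = addOrderOf (((e i).natAbs : ZMod N)) := by
    rcases h2 with h | h <;> rw [h]
    rw [addOrderOf_neg]
  rw [h3]
  have h4 : addOrderOf ((E : ZMod N)) = N / N.gcd E := ZMod.addOrderOf_coe E hNpos.ne'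
  rw [← hE, h4]
  have h5 : N.gcd E = E := by
    rw [hN]
    exact Nat.gcd_eq_right ⟨k, by ring⟩
  rw [h5, hN, Nat.mul_div_cancel _ hEpos]
end

section
/- Let n_1, m_1, n_2, m_2 be nonzero integers and let Γ be the group with presentation ⟨a, t_1, t_2 | t_1 a^{n_1} t_1⁻¹ = a^{m_1}, t_2 a^{n_2} t_2⁻¹ = a^{m_2}⟩ (a generalised Baumslag–Solitar group over a rose with two loops). Then for every prime q, the second group cohomology H²(Γ, ZMod q) with coefficients in the trivial one-dimensional representation over 𝔽_q is nontrivial. -/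
/-!
By Mayer–Vietoris for the graph of groups, `H²(Γ, M)` is the cokernel of
`s ↦ ((n₁ - m₁) s, (n₂ - m₂) s) : M → M²`, which is nonzero for `M = 𝔽_q`. Concretely, pick
`(x₁, x₂)` outside that image and realise it by a central extension: an iterated HNN extension
of `ℤ × M` in which `t_i a^{n_i} t_i⁻¹ a^{-m_i} = x_i` and `M` is central. If `H²(Γ, M) = 0`, the
induced map from `Γ` to the quotient by `M` lifts to a homomorphism. Moving the lift of `a` by
`s ∈ M` moves both relator values by `(n_i - m_i) s` (the lifts of `t_i` do not matter, as `M` is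
central), so `(x₁, x₂)` would lie in the image.
-/

/-- The relators `t_i a^{n_i} t_i⁻¹ a^{-m_i}` (for `i = 1, 2`) of a generalised
Baumslag–Solitar group over a rose with two loops, with generators `0 = a`,
`1 = t_1`, `2 = t_2`. -/
def roseRel (n₁ m₁ n₂ m₂ : ℤ) : Set (FreeGroup (Fin 3)) :=
  {FreeGroup.of 1 * FreeGroup.of 0 ^ n₁ * (FreeGroup.of 1)⁻¹ * FreeGroup.of 0 ^ (-m₁),
   FreeGroup.of 2 * FreeGroup.of 0 ^ n₂ * (FreeGroup.of 2)⁻¹ * FreeGroup.of 0 ^ (-m₂)}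

/-- The generalised Baumslag–Solitar group over a rose with two loops, with presentation
`⟨a, t₁, t₂ ∣ t₁ a^{n₁} t₁⁻¹ = a^{m₁}, t₂ a^{n₂} t₂⁻¹ = a^{m₂}⟩`. -/
abbrev GBSRoseTwo (n₁ m₁ n₂ m₂ : ℤ) := PresentedGroup (roseRel n₁ m₁ n₂ m₂)

open Multiplicative groupCohomology

universe u

def conjRelator {G : Type*} [Group G] (n m : ℤ) (t a : G) : G := t * a ^ n * t⁻¹ * a ^ (-m)

lemma map_conjRelator {G H : Type*} [Group G] [Group H] (f : G →* H) (n m : ℤ) (t a : G) :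
    f (conjRelator n m t a) = conjRelator n m (f t) (f a) := by
  simp only [conjRelator, map_mul, map_zpow, map_inv]

lemma conjRelator_central_mul {N E : Type*} [CommGroup N] [Group E] {ι : N →* E}
    (hι : ∀ c e, Commute (ι c) e) (n m : ℤ) (u s : N) (t a : E) :
    conjRelator n m (ι u * t) (ι s * a) = ι (s ^ (n - m)) * conjRelator n m t a := by
  -- Compute in `N × E`, where the first factor is commutative, and push forward along `μ`.
  let μ : N × E →* E := MonoidHom.noncommCoprod ι (MonoidHom.id E) hι
  have hμ : ∀ c e, μ (c, e) = ι c * e := fun _ _ => rfl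
  have hfst : conjRelator n m (u, t) (s, a) = (s ^ (n - m), conjRelator n m t a) := by
    refine Prod.ext ?_ rfl
    simp only [conjRelator, Prod.fst_mul, Prod.fst_inv, Prod.pow_fst]
    rw [mul_comm u, mul_inv_cancel_right, ← zpow_add, sub_eq_add_neg]
  rw [← hμ, ← hμ, ← map_conjRelator, hfst, hμ]

lemma eq_zsmul_of_conjRelator_central_mul_eq_one {M E : Type*} [AddCommGroup M] [Group E]
    {ι : Multiplicative M →* E} (hι : Function.Injective ι) (hc : ∀ c e, Commute (ι c) e)
    {n m : ℤ} {t a : E} {x : M} (h : conjRelator n m t a = ι (ofAdd x)) (u s : Multiplicative M)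
    (h' : conjRelator n m (ι u * t) (ι s * a) = 1) : x = (n - m) • -toAdd s := by
  rw [conjRelator_central_mul hc, h, ← map_mul, ← map_one ι, hι.eq_iff] at h'
  rw [smul_neg, eq_neg_iff_add_eq_zero, add_comm]
  exact congrArg toAdd h'

theorem MonoidHom.normal_range_of_commute {N E : Type*} [Group N] [Group E] (f : N →* E)
    (hf : ∀ c e, Commute (f c) e) : f.range.Normal :=
  ⟨by rintro _ ⟨c, rfl⟩ e; exact ⟨c, by rw [← (hf c e).eq, mul_inv_cancel_right]⟩⟩

noncomputable def MonoidHom.rangeEquivRange {K G H : Type*} [Group K] [Group G] [Group H]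
    {f : K →* G} {g : K →* H} (hf : Function.Injective f) (hg : Function.Injective g) :
    f.range ≃* g.range :=
  (MonoidHom.ofInjective hf).symm.trans (MonoidHom.ofInjective hg)

open MonoidHom in
lemma MonoidHom.rangeEquivRange_apply {K G H : Type*} [Group K] [Group G] [Group H]
    {f : K →* G} {g : K →* H} (hf : Function.Injective f) (hg : Function.Injective g) (k : K) :
    rangeEquivRange hf hg ⟨f k, mem_range.2 ⟨k, rfl⟩⟩ = ⟨g k, mem_range.2 ⟨k, rfl⟩⟩ := by
  have hk : (ofInjective hf).symm ⟨f k, mem_range.2 ⟨k, rfl⟩⟩ = k :=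
    (MulEquiv.symm_apply_eq _).2 (Subtype.ext (ofInjective_apply hf).symm)
  rw [rangeEquivRange, MulEquiv.trans_apply, hk]
  exact Subtype.ext (ofInjective_apply hg)

namespace GroupExtension

def ofQuotientRange {N E : Type*} [Group N] [Group E] (ι : N →* E) (hι : Function.Injective ι)
    [ι.range.Normal] : GroupExtension N E (E ⧸ ι.range) where
  inl := ι
  rightHom := QuotientGroup.mk' ι.range
  inl_injective := hι
  range_inl_eq_ker_rightHom := (QuotientGroup.ker_mk' _).symm
  rightHom_surjective := QuotientGroup.mk'_surjective _

theorem exists_eq_inl_mul_of_rightHom_eq {N E Q : Type*} [Group N] [Group E] [Group Q]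
    (S : GroupExtension N E Q) {e e' : E} (h : S.rightHom e = S.rightHom e') :
    ∃ c, e = S.inl c * e' := by
  obtain ⟨c, hc⟩ : e * e'⁻¹ ∈ S.inl.range := by
    rw [S.range_inl_eq_ker_rightHom, MonoidHom.mem_ker, map_mul, map_inv, h, mul_inv_cancel]
  exact ⟨c, by rw [hc, inv_mul_cancel_right]⟩

section Central

variable {M E Q G : Type*} [AddCommGroup M] [Group E] [Group Q] [Group G]
  {S : GroupExtension (Multiplicative M) E Q} {τ : G → E} {f : G × G → M}

theorem cocycle_condition_of_mul_eq_inl_mul (hS : ∀ c e, Commute (S.inl c) e)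
    (hf : ∀ g h, τ g * τ h = S.inl (ofAdd (f (g, h))) * τ (g * h)) (g h j : G) :
    f (g * h, j) + f (g, h) = f (h, j) + f (g, h * j) := by
  have e₁ : τ g * τ h * τ j = S.inl (ofAdd (f (g * h, j) + f (g, h))) * τ (g * h * j) := by
    rw [hf g h, mul_assoc, hf (g * h) j, ← mul_assoc, ← map_mul, ← ofAdd_add, add_comm]
  have e₂ : τ g * τ h * τ j = S.inl (ofAdd (f (h, j) + f (g, h * j))) * τ (g * h * j) := by
    rw [mul_assoc, hf h j, ← mul_assoc, ← (hS _ _).eq, mul_assoc, hf g (h * j), ← mul_assoc,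
      ← map_mul, ← ofAdd_add, mul_assoc g]
  exact congrArg toAdd (S.inl_injective (mul_right_cancel (e₁.symm.trans e₂)))

theorem inl_neg_mul_map_mul (hS : ∀ c e, Commute (S.inl c) e)
    (hf : ∀ g h, τ g * τ h = S.inl (ofAdd (f (g, h))) * τ (g * h)) {x : G → M}
    (hx : ∀ g h, x h - x (g * h) + x g = f (g, h)) (g h : G) :
    S.inl (ofAdd (-x (g * h))) * τ (g * h) =
      S.inl (ofAdd (-x g)) * τ g * (S.inl (ofAdd (-x h)) * τ h) := by
  rw [mul_assoc, ← mul_assoc (τ g), ← (hS _ _).eq, mul_assoc, hf, ← mul_assoc, ← mul_assoc,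
    ← map_mul, ← map_mul, ← hx, ← ofAdd_add, ← ofAdd_add]
  congr 3
  abel

end Central

theorem exists_lift_of_subsingleton_H2 {k M G : Type u} [CommRing k] [AddCommGroup M]
    [Module k M] [Group G] [Subsingleton (H2 (Rep.trivial k G M))] {E Q : Type*} [Group E]
    [Group Q] (S : GroupExtension (Multiplicative M) E Q) (hS : ∀ c e, Commute (S.inl c) e)
    (ψ : G →* Q) : ∃ Φ : G →* E, S.rightHom.comp Φ = ψ := by
  let τ : G → E := fun g => S.surjInvRightHom (ψ g)
  have hτ : ∀ g h, ∃ c : M, τ g * τ h = S.inl (ofAdd c) * τ (g * h) := by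
    intro g h
    obtain ⟨c, hc⟩ := S.surjInvRightHom.mul_mul_mul_inv_mem_range_inl (ψ g) (ψ h)
    exact ⟨toAdd c, by simp only [τ, ofAdd_toAdd, hc, map_mul, inv_mul_cancel_right]⟩
  choose f hf using hτ
  have hcocycle : (fun p : G × G => f p.1 p.2) ∈ cocycles₂ (Rep.trivial k G M) := by
    rw [mem_cocycles₂_iff]
    intro g h j
    simpa [add_comm] using
      cocycle_condition_of_mul_eq_inl_mul hS (f := fun p => f p.1 p.2) hf g h j
  obtain ⟨x, hx⟩ := (H2π_eq_zero_iff ⟨_, hcocycle⟩).1 (Subsingleton.elim _ _)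
  have hcob : ∀ g h, x h - x (g * h) + x g = f g h := fun g h => by
    have := congrFun hx (g, h)
    simp only [d₁₂_hom_apply, Representation.isTrivial_def, LinearMap.id_coe, id_eq] at this
    exact this
  refine ⟨MonoidHom.mk' (fun g => S.inl (ofAdd (-x g)) * τ g)
    (inl_neg_mul_map_mul hS (f := fun p => f p.1 p.2) hf hcob), ?_⟩
  ext g
  simp [τ]

end GroupExtension

section Twisted

variable {M : Type u} [AddCommGroup M]

def twistedScale (n : ℤ) (x : M) : Multiplicative (ℤ × M) →* Multiplicative (ℤ × M) :=
  AddMonoidHom.toMultiplicative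
    { toFun := fun p => (n * p.1, p.1 • x + p.2)
      map_zero' := by simp
      map_add' := fun p p' => by
        ext
        · simp [mul_add]
        · simp only [Prod.fst_add, Prod.snd_add, add_smul]; abel }

@[simp]
lemma twistedScale_apply (n : ℤ) (x : M) (p : Multiplicative (ℤ × M)) :
    twistedScale n x p = ofAdd (n * p.toAdd.1, p.toAdd.1 • x + p.toAdd.2) := rfl

lemma twistedScale_injective {n : ℤ} (hn : n ≠ 0) (x : M) :
    Function.Injective (twistedScale n x) := by
  intro p p' h
  simp only [twistedScale_apply, EmbeddingLike.apply_eq_iff_eq, Prod.mk.injEq] at h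
  have h₁ := mul_left_cancel₀ hn h.1
  exact toAdd.injective (Prod.ext h₁ (by simpa [h₁] using h.2))

section

variable {H : Type*} [Group H] (β : Multiplicative (ℤ × M) →* H) (hβ : Function.Injective β)
  {n m : ℤ} (hn : n ≠ 0) (hm : m ≠ 0) (x : M)

/-- Adjoins `t` with `t β(n k, c) t⁻¹ = β(m k, k • x + c)`. Here `β (1, 0)` plays the role of `a`,
and `β ({0} × M)` stays central because both embeddings fix `{0} × M`. -/
abbrev TwistedHNN :=
  HNNExtension H (β.comp (twistedScale n 0)).range (β.comp (twistedScale m x)).range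
    (MonoidHom.rangeEquivRange (hβ.comp (twistedScale_injective hn 0))
      (hβ.comp (twistedScale_injective hm x)))

namespace TwistedHNN
open HNNExtension

variable {β}

lemma t_mul_of_mul_inv_t (p : Multiplicative (ℤ × M)) :
    (t : TwistedHNN β hβ hn hm x) * of (β (twistedScale n 0 p)) * t⁻¹ =
      of (β (twistedScale m x p)) := by
  refine (equiv_eq_conj
    ⟨β.comp (twistedScale n 0) p, MonoidHom.mem_range.2 ⟨p, rfl⟩⟩).symm.trans ?_
  rw [MonoidHom.rangeEquivRange_apply]
  rfl

lemma conjRelator_eq :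
    conjRelator n m (t : TwistedHNN β hβ hn hm x) (of (β (ofAdd (1, 0)))) =
      of (β (ofAdd (0, x))) := by
  have hpow : (ofAdd ((1 : ℤ), (0 : M))) ^ n = twistedScale n 0 (ofAdd (1, 0)) := by
    apply toAdd.injective; simp
  rw [conjRelator, ← map_zpow, ← map_zpow, hpow, t_mul_of_mul_inv_t hβ hn hm x, ← map_zpow,
    ← map_zpow, ← map_mul, ← map_mul]
  congr 2
  apply toAdd.injective; simp

lemma commute_of_ofAdd_zero {c : M} (hc : ∀ h, Commute (β (ofAdd (0, c))) h)
    (w : TwistedHNN β hβ hn hm x) : Commute (of (β (ofAdd (0, c)))) w := by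
  induction w using HNNExtension.induction_on with
  | of h => exact (hc h).map of
  | t =>
    have hfix : ∀ k (y : M), twistedScale k y (ofAdd (0, c)) = ofAdd (0, c) := by
      intro k y; apply toAdd.injective; simp
    have h := t_mul_of_mul_inv_t hβ hn hm x (ofAdd (0, c))
    rw [hfix, hfix, mul_inv_eq_iff_eq_mul] at h
    exact h.symm
  | mul _ _ h₁ h₂ => exact h₁.mul_right h₂
  | inv _ h => exact h.inv_right

end TwistedHNN
end

open HNNExtension in
theorem exists_central_conjRelators {n₁ m₁ n₂ m₂ : ℤ} (hn₁ : n₁ ≠ 0) (hm₁ : m₁ ≠ 0)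
    (hn₂ : n₂ ≠ 0) (hm₂ : m₂ ≠ 0) (x₁ x₂ : M) :
    ∃ (E : Type u) (_ : Group E) (ι : Multiplicative M →* E) (a t₁ t₂ : E),
      Function.Injective ι ∧ (∀ c e, Commute (ι c) e) ∧
      conjRelator n₁ m₁ t₁ a = ι (ofAdd x₁) ∧ conjRelator n₂ m₂ t₂ a = ι (ofAdd x₂) := by
  let D₁ := TwistedHNN (MonoidHom.id _) Function.injective_id hn₁ hm₁ x₁
  let ι₁ : Multiplicative (ℤ × M) →* D₁ := of
  let D := TwistedHNN ι₁ (of_injective _) hn₂ hm₂ x₂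
  let ι : Multiplicative M →* D :=
    (of.comp ι₁).comp (AddMonoidHom.toMultiplicative (AddMonoidHom.inr ℤ M))
  let ι₂ : D₁ →* D := of
  refine ⟨D, _, ι, ι₂ (ι₁ (ofAdd (1, 0))), ι₂ (t : D₁), (t : D), ?_, ?_, ?_, ?_⟩
  · exact ((of_injective _).comp (of_injective _)).comp fun c c' h => by
      simpa using congrArg (fun p => (toAdd p).2) h
  · intro c
    exact TwistedHNN.commute_of_ofAdd_zero (of_injective _) hn₂ hm₂ x₂
      (TwistedHNN.commute_of_ofAdd_zero Function.injective_id hn₁ hm₁ x₁ (Commute.all _))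
  · have h := congrArg ι₂ (TwistedHNN.conjRelator_eq
      (β := MonoidHom.id (Multiplicative (ℤ × M))) Function.injective_id hn₁ hm₁ x₁)
    rwa [map_conjRelator] at h
  · exact TwistedHNN.conjRelator_eq (β := ι₁) (of_injective _) hn₂ hm₂ x₂

end Twisted

theorem exists_notMem_range_zsmul_pair (K : Type*) [Ring K] [NoZeroDivisors K] [Nontrivial K]
    (d₁ d₂ : ℤ) : ∃ x : K × K, x ∉ Set.range fun s : K => (d₁ • s, d₂ • s) := by
  by_contra! h
  obtain ⟨s, hs⟩ := h (1, 0)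
  obtain ⟨s', hs'⟩ := h (0, 1)
  simp only [Prod.mk.injEq, zsmul_eq_mul] at hs hs'
  have hs₀ : s ≠ 0 := by rintro rfl; simp at hs
  have hd₂ : (d₂ : K) = 0 := (mul_eq_zero.1 hs.2).resolve_right hs₀
  simp [hd₂] at hs'

namespace GBSRoseTwo

variable {n₁ m₁ n₂ m₂ : ℤ}

open PresentedGroup

lemma conjRelator_of_one :
    conjRelator n₁ m₁ (of 1 : GBSRoseTwo n₁ m₁ n₂ m₂) (of 0) = 1 :=
  (map_conjRelator (mk _) _ _ _ _).symm.trans (one_of_mem (Or.inl rfl))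

lemma conjRelator_of_two :
    conjRelator n₂ m₂ (of 2 : GBSRoseTwo n₁ m₁ n₂ m₂) (of 0) = 1 :=
  (map_conjRelator (mk _) _ _ _ _).symm.trans (one_of_mem (Or.inr rfl))

def lift {G : Type*} [Group G] (a t₁ t₂ : G) (h₁ : conjRelator n₁ m₁ t₁ a = 1)
    (h₂ : conjRelator n₂ m₂ t₂ a = 1) : GBSRoseTwo n₁ m₁ n₂ m₂ →* G :=
  toGroup (f := ![a, t₁, t₂]) <| by
    rintro r (rfl | rfl)
    · exact (map_conjRelator _ n₁ m₁ _ _).trans (by simpa using h₁)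
    · exact (map_conjRelator _ n₂ m₂ _ _).trans (by simpa using h₂)

lemma lift_of {G : Type*} [Group G] (a t₁ t₂ : G) (h₁ : conjRelator n₁ m₁ t₁ a = 1)
    (h₂ : conjRelator n₂ m₂ t₂ a = 1) (i : Fin 3) : lift a t₁ t₂ h₁ h₂ (of i) = ![a, t₁, t₂] i :=
  toGroup.of _

theorem not_subsingleton_H2_of_central_conjRelators {k M : Type} [CommRing k] [AddCommGroup M]
    [Module k M] {E : Type*} [Group E] {ι : Multiplicative M →* E} (hι : Function.Injective ι)
    (hc : ∀ c e, Commute (ι c) e) {a t₁ t₂ : E} {x₁ x₂ : M}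
    (h₁ : conjRelator n₁ m₁ t₁ a = ι (ofAdd x₁)) (h₂ : conjRelator n₂ m₂ t₂ a = ι (ofAdd x₂))
    (hx : (x₁, x₂) ∉ Set.range fun s : M => ((n₁ - m₁) • s, (n₂ - m₂) • s)) :
    ¬ Subsingleton (H2 (Rep.trivial k (GBSRoseTwo n₁ m₁ n₂ m₂) M)) := by
  intro _
  have := ι.normal_range_of_commute hc
  let S := GroupExtension.ofQuotientRange ι hι
  have hrel : ∀ {n m : ℤ} {t : E} {x : M}, conjRelator n m t a = ι (ofAdd x) →
      conjRelator n m (S.rightHom t) (S.rightHom a) = 1 := fun h => by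
    rw [← map_conjRelator, h]
    exact S.rightHom_inl _
  obtain ⟨Φ, hΦ⟩ := S.exists_lift_of_subsingleton_H2 (k := k) hc (lift _ _ _ (hrel h₁) (hrel h₂))
  have hΦ_of : ∀ i, S.rightHom (Φ (of i)) = S.rightHom (![a, t₁, t₂] i) := fun i => by
    rw [← MonoidHom.comp_apply, hΦ, lift_of]
    fin_cases i <;> rfl
  obtain ⟨s, hs⟩ := S.exists_eq_inl_mul_of_rightHom_eq (hΦ_of 0)
  obtain ⟨u₁, hu₁⟩ := S.exists_eq_inl_mul_of_rightHom_eq (hΦ_of 1)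
  obtain ⟨u₂, hu₂⟩ := S.exists_eq_inl_mul_of_rightHom_eq (hΦ_of 2)
  have hΦ₁ := congrArg Φ (conjRelator_of_one (n₂ := n₂) (m₂ := m₂))
  have hΦ₂ := congrArg Φ (conjRelator_of_two (n₁ := n₁) (m₁ := m₁))
  rw [map_conjRelator, map_one, hs, hu₁] at hΦ₁
  rw [map_conjRelator, map_one, hs, hu₂] at hΦ₂
  exact hx ⟨-toAdd s, Prod.ext
    (eq_zsmul_of_conjRelator_central_mul_eq_one hι hc h₁ u₁ s hΦ₁).symm
    (eq_zsmul_of_conjRelator_central_mul_eq_one hι hc h₂ u₂ s hΦ₂).symm⟩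

end GBSRoseTwo

/-- Computation in the second case of the proof of the paper's Lemma 5.3: for a
generalised Baumslag–Solitar group over a rose with two loops, `H²` with coefficients in
the trivial one-dimensional representation over `𝔽_q` is nonzero, for every prime `q`. -/
theorem GBSRoseTwo_H2_trivial_coefficients_nonzero
    (n₁ m₁ n₂ m₂ : ℤ) (hn₁ : n₁ ≠ 0) (hm₁ : m₁ ≠ 0) (hn₂ : n₂ ≠ 0) (hm₂ : m₂ ≠ 0)
    (q : ℕ) (hq : q.Prime) :
    ¬ Subsingleton
        (groupCohomology
          (Rep.trivial (ZMod q) (GBSRoseTwo n₁ m₁ n₂ m₂) (ZMod q)) 2) := by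
  have : Fact q.Prime := ⟨hq⟩
  obtain ⟨⟨x₁, x₂⟩, hx⟩ := exists_notMem_range_zsmul_pair (ZMod q) (n₁ - m₁) (n₂ - m₂)
  obtain ⟨E, _, ι, a, t₁, t₂, hι, hc, h₁, h₂⟩ :=
    exists_central_conjRelators hn₁ hm₁ hn₂ hm₂ x₁ x₂
  exact GBSRoseTwo.not_subsingleton_H2_of_central_conjRelators hι hc h₁ h₂ hx
end
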